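/- arXiv:2112.14964 — 11 statements merged into one kernel-verified Lean document; each statement's English description precedes it below -/
import Mathlib

section
/- Iterated promotion-width closure: assume the parameters of superLL satisfy axiom (ce1), i.e. for all m > 0, all n and all e, p_m(e) → p_n(e) → p_{m+n-1}(e). Then for all natural numbers i ≤ k, all m and all e ∈ E, if p_k(e) and p_m(e) hold then p_{k+(m-1)·i}(e) holds. -/
/-- Iterated promotion-width closure: from axiom (ce1), if `p k e` and `p m e` then
`p (k + (m-1)·i) e` for every `i ≤ k` (where `k + (m-1)·i = k - i + m·i`). -/
theorem superLL_iterated_promotion_width {E : Type} (p : ℕ → E → Prop)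
    (ce1 : ∀ (m n : ℕ) (e : E), 0 < m → p m e → p n e → p (m + n - 1) e) :
    ∀ (i k m : ℕ) (e : E), i ≤ k → p k e → p m e → p (k - i + m * i) e := by
  intro i
  induction i with
  | zero => intro k m e _ hk _; simpa using hk
  | succ i ih =>
    intro k m e hik hk hm
    have h1 : i ≤ k := Nat.le_of_succ_le hik
    have ha := ih k m e h1 hk hm
    have hpos : 0 < k - i + m * i := by omega
    have := ce1 _ m e hpos ha hm
    have heq : k - i + m * i + m - 1 = k - (i+1) + m * (i+1) := by
      have : i < k := hik
      ring_nf; omega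
    rwa [heq] at this
end

section
/- Axiom Expansion for superLL: if the parameters satisfy the expansion axiom (ea), i.e. p_1(e) holds for every e ∈ E, then for every E-formula A the sequent ⊢ A, A⊥ is derivable in superLL(E,de,co,dg,p) using the axiom rule only on atomic formulas (i.e. only instances ⊢ X, X⊥); moreover this derivation uses no cut. -/
/-- Linear logic formulas with exponential connectives indexed by signatures in `E`. -/
inductive Formula (E : Type) : Type
  | var : ℕ → Formula E
  | covar : ℕ → Formula E
  | tens : Formula E → Formula E → Formula E
  | parr : Formula E → Formula E → Formula E
  | one : Formula E
  | bot : Formula E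
  | awith : Formula E → Formula E → Formula E
  | aplus : Formula E → Formula E → Formula E
  | top : Formula E
  | zero : Formula E
  | oc : E → Formula E → Formula E
  | wn : E → Formula E → Formula E

namespace Formula

/-- Duality on formulas. -/
def dual {E : Type} : Formula E → Formula E
  | var n => covar n
  | covar n => var n
  | tens A B => parr A.dual B.dual
  | parr A B => tens A.dual B.dual
  | one => bot
  | bot => one
  | awith A B => aplus A.dual B.dual
  | aplus A B => awith A.dual B.dual
  | top => zero
  | zero => top
  | oc e A => wn e A.dual
  | wn e A => oc e A.dual

end Formula

/-- superLL(E, de, co, dg, p) with the axiom rule restricted to atomic formulas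
(`⊢ X, X⊥` only).  The `Bool` index records whether the cut rule may be used. -/
inductive SuperLLA {E : Type} (de : E → Prop) (co : List E → E → Prop)
    (dg : E → E → E → Prop) (p : ℕ → E → Prop) : Bool → List (Formula E) → Prop
  | ax (b) (n : ℕ) : SuperLLA de co dg p b [Formula.var n, Formula.covar n]
  | ex {b Γ Δ} : SuperLLA de co dg p b Γ → Γ.Perm Δ → SuperLLA de co dg p b Δ
  | cut {A : Formula E} {Γ Δ : List (Formula E)} : SuperLLA de co dg p true (A :: Γ) →
      SuperLLA de co dg p true (A.dual :: Δ) → SuperLLA de co dg p true (Γ ++ Δ)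
  | tens {b} {A B : Formula E} {Γ Δ : List (Formula E)} : SuperLLA de co dg p b (A :: Γ) → SuperLLA de co dg p b (B :: Δ) →
      SuperLLA de co dg p b (A.tens B :: (Γ ++ Δ))
  | parr {b} {A B : Formula E} {Γ : List (Formula E)} : SuperLLA de co dg p b (A :: B :: Γ) →
      SuperLLA de co dg p b (A.parr B :: Γ)
  | one (b) : SuperLLA de co dg p b [Formula.one]
  | bot {b Γ} : SuperLLA de co dg p b Γ → SuperLLA de co dg p b (Formula.bot :: Γ)
  | awith {b} {A B : Formula E} {Γ : List (Formula E)} : SuperLLA de co dg p b (A :: Γ) → SuperLLA de co dg p b (B :: Γ) →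
      SuperLLA de co dg p b (A.awith B :: Γ)
  | aplus1 {b} {A B : Formula E} {Γ : List (Formula E)} : SuperLLA de co dg p b (A :: Γ) →
      SuperLLA de co dg p b (A.aplus B :: Γ)
  | aplus2 {b} {A B : Formula E} {Γ : List (Formula E)} : SuperLLA de co dg p b (B :: Γ) →
      SuperLLA de co dg p b (A.aplus B :: Γ)
  | top (b) (Γ) : SuperLLA de co dg p b (Formula.top :: Γ)
  | der {b e A Γ} : de e → SuperLLA de co dg p b (A :: Γ) →
      SuperLLA de co dg p b (Formula.wn e A :: Γ)
  | con {b} {l : List E} {e A Γ} : co l e →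
      SuperLLA de co dg p b (l.map (fun ei => Formula.wn ei A) ++ Γ) →
      SuperLLA de co dg p b (Formula.wn e A :: Γ)
  | dig {b e1 e2 e A Γ} : dg e1 e2 e →
      SuperLLA de co dg p b (Formula.wn e1 (Formula.wn e2 A) :: Γ) →
      SuperLLA de co dg p b (Formula.wn e A :: Γ)
  | prom {b e A} {Δ : List (Formula E)} : p Δ.length e → SuperLLA de co dg p b (A :: Δ) →
      SuperLLA de co dg p b (Formula.oc e A :: Δ.map (Formula.wn e))

/-- Axiom expansion: under the expansion axiom (ea), `⊢ A, A⊥` is derivable for every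
formula `A` using the axiom rule only on atomic formulas, and without cut. -/
theorem superLL_axiom_expansion {E : Type}
    (de : E → Prop) (co : List E → E → Prop) (dg : E → E → E → Prop) (p : ℕ → E → Prop)
    (ea : ∀ e : E, p 1 e) :
    ∀ A : Formula E, SuperLLA de co dg p false [A, A.dual] := by
  intro A
  induction A with
  | var n => exact .ax _ n
  | covar n => exact .ex (.ax _ n) (List.Perm.swap _ _ _)
  | tens A B ihA ihB =>
    refine .ex (.parr (.ex (SuperLLA.tens ihA ihB) ?_)) (List.Perm.swap _ _ _)
    exact List.perm_append_comm (l₁ := [A.tens B]) (l₂ := [A.dual, B.dual])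
  | parr A B ihA ihB =>
    refine .parr (.ex (SuperLLA.tens (.ex ihA (List.Perm.swap _ _ _))
      (.ex ihB (List.Perm.swap _ _ _))) ?_)
    exact List.perm_append_comm (l₁ := [A.dual.tens B.dual]) (l₂ := [A, B])
  | one => exact .ex (.bot (.one _)) (List.Perm.swap _ _ _)
  | bot => exact .bot (.one _)
  | awith A B ihA ihB =>
    exact .awith (.ex (.aplus1 (.ex ihA (List.Perm.swap _ _ _))) (List.Perm.swap _ _ _))
      (.ex (.aplus2 (.ex ihB (List.Perm.swap _ _ _))) (List.Perm.swap _ _ _))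
  | aplus A B ihA ihB =>
    refine .ex (.awith (.ex (.aplus1 ihA) (List.Perm.swap _ _ _))
      (.ex (.aplus2 ihB) (List.Perm.swap _ _ _))) (List.Perm.swap _ _ _)
  | top => exact .top _ _
  | zero => exact .ex (.top _ _) (List.Perm.swap _ _ _)
  | oc e A ih => exact SuperLLA.prom (Δ := [A.dual]) (ea e) ih
  | wn e A ih =>
    exact .ex (SuperLLA.prom (Δ := [A]) (ea e) (.ex ih (List.Perm.swap _ _ _)))
      (List.Perm.swap _ _ _)
end

section
/- Admissibility of Digging: assume the parameters of superLL satisfy the Girardization axioms (gir1)–(gir5). Consider the system obtained from superLL(E,de,co,dg,p) by removing the functorial promotion rule (p) and the digging rule (dg) and adding Girard's promotion rule (p_g). Then the digging rule is admissible in this system: if ⊢ ?_{e1}?_{e2}A, Γ is provable in it and dg(e1,e2,e) holds, then ⊢ ?_e A, Γ is provable in it. More generally, if ⊢ ?_{e1}?_e A,…,?_{en}?_e A, Γ is provable in it and dg(ei,e,e'i) holds for all 1 ≤ i ≤ n, then ⊢ ?_{e'1}A,…,?_{e'n}A, Γ is provable in it. -/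
namespace SuperLLStmt

/-- Linear logic formulas with exponential connectives indexed by signatures in `E`. -/
inductive Formula (E : Type) : Type
  | var : ℕ → Formula E
  | covar : ℕ → Formula E
  | tens : Formula E → Formula E → Formula E
  | parr : Formula E → Formula E → Formula E
  | one : Formula E
  | bot : Formula E
  | awith : Formula E → Formula E → Formula E
  | aplus : Formula E → Formula E → Formula E
  | top : Formula E
  | zero : Formula E
  | oc : E → Formula E → Formula E
  | wn : E → Formula E → Formula E

namespace Formula

/-- Duality on formulas. -/
def dual {E : Type} : Formula E → Formula E
  | var n => covar n
  | covar n => var n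
  | tens A B => parr A.dual B.dual
  | parr A B => tens A.dual B.dual
  | one => bot
  | bot => one
  | awith A B => aplus A.dual B.dual
  | aplus A B => awith A.dual B.dual
  | top => zero
  | zero => top
  | oc e A => wn e A.dual
  | wn e A => oc e A.dual

end Formula

/-- superLL with Girard's promotion rule instead of functorial promotion and digging:
the functorial promotion and digging rules are removed and Girard's promotion `promg`
is added. -/
inductive SuperLLG {E : Type} (de : E → Prop) (co : List E → E → Prop)
    (dg : E → E → E → Prop) (p : ℕ → E → Prop) : Bool → List (Formula E) → Prop
  | ax (b) (A : Formula E) : SuperLLG de co dg p b [A, A.dual]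
  | ex {b Γ Δ} : SuperLLG de co dg p b Γ → Γ.Perm Δ → SuperLLG de co dg p b Δ
  | cut {A : Formula E} {Γ Δ : List (Formula E)} : SuperLLG de co dg p true (A :: Γ) →
      SuperLLG de co dg p true (A.dual :: Δ) → SuperLLG de co dg p true (Γ ++ Δ)
  | tens {b} {A B : Formula E} {Γ Δ : List (Formula E)} : SuperLLG de co dg p b (A :: Γ) →
      SuperLLG de co dg p b (B :: Δ) → SuperLLG de co dg p b (A.tens B :: (Γ ++ Δ))
  | parr {b} {A B : Formula E} {Γ : List (Formula E)} : SuperLLG de co dg p b (A :: B :: Γ) →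
      SuperLLG de co dg p b (A.parr B :: Γ)
  | one (b) : SuperLLG de co dg p b [Formula.one]
  | bot {b Γ} : SuperLLG de co dg p b Γ → SuperLLG de co dg p b (Formula.bot :: Γ)
  | awith {b} {A B : Formula E} {Γ : List (Formula E)} : SuperLLG de co dg p b (A :: Γ) →
      SuperLLG de co dg p b (B :: Γ) → SuperLLG de co dg p b (A.awith B :: Γ)
  | aplus1 {b} {A B : Formula E} {Γ : List (Formula E)} : SuperLLG de co dg p b (A :: Γ) →
      SuperLLG de co dg p b (A.aplus B :: Γ)
  | aplus2 {b} {A B : Formula E} {Γ : List (Formula E)} : SuperLLG de co dg p b (B :: Γ) →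
      SuperLLG de co dg p b (A.aplus B :: Γ)
  | top (b) (Γ) : SuperLLG de co dg p b (Formula.top :: Γ)
  | der {b e A Γ} : de e → SuperLLG de co dg p b (A :: Γ) →
      SuperLLG de co dg p b (Formula.wn e A :: Γ)
  | con {b} {l : List E} {e A Γ} : co l e →
      SuperLLG de co dg p b (l.map (fun ei => Formula.wn ei A) ++ Γ) →
      SuperLLG de co dg p b (Formula.wn e A :: Γ)
  | promg {b} {e : E} {A : Formula E} {eps es : List E} {As : List (Formula E)} :
      List.Forall₂ (fun εi ei => dg e εi ei) eps es → eps.length = As.length →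
      p As.length e →
      SuperLLG de co dg p b (A :: List.zipWith Formula.wn eps As) →
      SuperLLG de co dg p b (Formula.oc e A :: List.zipWith Formula.wn es As)

-- auxiliary lemmas to be inserted above the theorem
theorem Formula.dual_dual {E : Type} (A : Formula E) : A.dual.dual = A := by
  induction A <;> simp [Formula.dual, *]

section DigAux

variable {E : Type} {de : E → Prop} {co : List E → E → Prop}
  {dg : E → E → E → Prop} {p : ℕ → E → Prop}

/-- The replacement relation: a formula is either kept or a dug exponential is replaced. -/
def DigRel (dg : E → E → E → Prop) (e : E) (A : Formula E) (B B' : Formula E) : Prop :=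
  B = B' ∨ ∃ ei e'i, dg ei e e'i ∧ B = Formula.wn ei (Formula.wn e A) ∧ B' = Formula.wn e'i A

theorem digRel_refl (e : E) (A : Formula E) (Γ : List (Formula E)) :
    List.Forall₂ (DigRel dg e A) Γ Γ :=
  List.forall₂_same.2 fun _ _ => Or.inl rfl

theorem digRel_map {e : E} {A : Formula E} {l l' : List E}
    (h : List.Forall₂ (fun x y => dg x e y) l l') :
    List.Forall₂ (DigRel dg e A) (l.map fun x => Formula.wn x (Formula.wn e A))
      (l'.map fun y => Formula.wn y A) := by
  induction h with
  | nil => exact List.Forall₂.nil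
  | cons hxy _ ih => exact List.Forall₂.cons (Or.inr ⟨_, _, hxy, rfl, rfl⟩) ih

theorem forall₂_append_split {α β : Type*} {R : α → β → Prop} :
    ∀ {l₁ l₂ : List α} {u : List β}, List.Forall₂ R (l₁ ++ l₂) u →
      ∃ u₁ u₂, u = u₁ ++ u₂ ∧ List.Forall₂ R l₁ u₁ ∧ List.Forall₂ R l₂ u₂ := by
  intro l₁
  induction l₁ with
  | nil => exact fun h => ⟨[], _, rfl, List.Forall₂.nil, h⟩
  | cons a l ih =>
    intro l₂ u h
    cases h with
    | cons hab h =>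
      obtain ⟨u₁, u₂, rfl, h₁, h₂⟩ := ih h
      exact ⟨_ :: u₁, u₂, rfl, List.Forall₂.cons hab h₁, h₂⟩

theorem dig_ax (gir1 : ∀ e1 e2 e : E, dg e1 e2 e → p 1 e1)
    {ei e e' : E} (h : dg ei e e') (b : Bool) (A : Formula E) :
    SuperLLG de co dg p b [Formula.wn e' A, Formula.oc ei (Formula.oc e A.dual)] := by
  have h0 : SuperLLG de co dg p b [Formula.oc e A.dual, Formula.wn e A] := by
    simpa [Formula.dual, Formula.dual_dual] using
      SuperLLG.ax (de := de) (co := co) (dg := dg) (p := p) b (Formula.oc e A.dual)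
  have h1 := SuperLLG.promg (de := de) (co := co) (e := ei) (A := Formula.oc e A.dual)
    (eps := [e]) (es := [e']) (As := [A])
    (List.Forall₂.cons h List.Forall₂.nil) rfl (gir1 _ _ _ h) h0
  exact SuperLLG.ex h1 (List.Perm.swap _ _ _)

theorem zip_aux
    (gir4 : ∀ e1 e2 e3 e' e : E, dg e1 e2 e' → dg e' e3 e →
      ∃ e'' : E, dg e2 e3 e'' ∧ dg e1 e'' e)
    (e : E) (A : Formula E) (e0 : E) :
    ∀ {eps es0 : List E}, List.Forall₂ (fun x y => dg e0 x y) eps es0 →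
    ∀ (As Δ' : List (Formula E)), eps.length = As.length →
    List.Forall₂ (DigRel dg e A) (List.zipWith Formula.wn es0 As) Δ' →
    ∃ (eps' es' : List E) (As' : List (Formula E)),
      List.Forall₂ (DigRel dg e A) (List.zipWith Formula.wn eps As)
        (List.zipWith Formula.wn eps' As') ∧
      List.Forall₂ (fun x y => dg e0 x y) eps' es' ∧
      eps'.length = As'.length ∧ As'.length = As.length ∧
      List.zipWith Formula.wn es' As' = Δ' := by
  intro eps es0 hf
  induction hf with
  | nil =>
    intro As Δ' hlen hR
    obtain rfl : As = [] := List.length_eq_zero_iff.1 hlen.symm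
    cases hR
    exact ⟨[], [], [], List.Forall₂.nil, List.Forall₂.nil, rfl, rfl, rfl⟩
  | @cons x y l l' hxy hrest ih =>
    intro As Δ' hlen hR
    cases As with
    | nil => simp at hlen
    | cons Aj AsT =>
      cases hR with
      | cons hhead htail =>
        obtain ⟨eps', es', As', h1, h2, h3, h4, h5⟩ := ih AsT _ (by simpa using hlen) htail
        rcases hhead with rfl | ⟨ei, e'i, hd, hEq, rfl⟩
        · exact ⟨x :: eps', y :: es', Aj :: As',
            List.Forall₂.cons (Or.inl rfl) h1, List.Forall₂.cons hxy h2,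
            by simp [h3], by simp [h4], by simp [h5]⟩
        · injection hEq with hy hAj
          subst hy; subst hAj
          obtain ⟨e'', hd1, hd2⟩ := gir4 e0 x e y e'i hxy hd
          exact ⟨e'' :: eps', e'i :: es', A :: As',
            List.Forall₂.cons (Or.inr ⟨x, e'', hd1, rfl, rfl⟩) h1,
            List.Forall₂.cons hd2 h2, by simp [h3], by simp [h4], by simp [h5]⟩

theorem dig_main
    (gir1 : ∀ e1 e2 e : E, dg e1 e2 e → p 1 e1)
    (gir2 : ∀ e1 e2 e : E, de e1 → dg e1 e2 e → co [e2] e)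
    (gir3 : ∀ (l : List E) (e1 e2 e : E), co l e1 → dg e1 e2 e →
      ∃ l' : List E, List.Forall₂ (fun εi ε'i => dg εi e2 ε'i) l l' ∧ co l' e)
    (gir4 : ∀ e1 e2 e3 e' e : E, dg e1 e2 e' → dg e' e3 e →
      ∃ e'' : E, dg e2 e3 e'' ∧ dg e1 e'' e)
    (e : E) (A : Formula E) {b : Bool} {Γ : List (Formula E)}
    (h : SuperLLG de co dg p b Γ) :
    ∀ Γ', List.Forall₂ (DigRel dg e A) Γ Γ' → SuperLLG de co dg p b Γ' := by
  induction h with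
  | ax b A0 =>
    intro Γ' h'
    cases h' with
    | cons h1 h' =>
      cases h' with
      | cons h2 h' =>
        cases h'
        rcases h1 with rfl | ⟨ei, e'i, hd, hEq, rfl⟩
        · rcases h2 with rfl | ⟨ej, e'j, hd, hEq, rfl⟩
          · exact SuperLLG.ax b A0
          · have hA0 : A0 = Formula.oc ej (Formula.oc e A.dual) := by
              rw [← Formula.dual_dual A0, hEq]; rfl
            subst hA0
            exact SuperLLG.ex (dig_ax gir1 hd b A) (List.Perm.swap _ _ _)
        · subst hEq
          rcases h2 with rfl | ⟨ej, e'j, hd2, hEq2, rfl⟩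
          · exact dig_ax gir1 hd b A
          · simp [Formula.dual] at hEq2
  | ex hp hperm ih =>
    intro Δ' hΔ'
    obtain ⟨w, hw, hperm'⟩ := List.perm_comp_forall₂ hperm hΔ'
    exact SuperLLG.ex (ih w hw) hperm'
  | cut h1 h2 ih1 ih2 =>
    intro Ξ hΞ
    obtain ⟨Γ', Δ', rfl, hΓ', hΔ'⟩ := forall₂_append_split hΞ
    exact SuperLLG.cut (ih1 _ (List.Forall₂.cons (Or.inl rfl) hΓ'))
      (ih2 _ (List.Forall₂.cons (Or.inl rfl) hΔ'))
  | tens h1 h2 ih1 ih2 =>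
    intro Ξ hΞ
    cases hΞ with
    | cons hhead htail =>
      rcases hhead with rfl | ⟨ei, e'i, hd, hEq, rfl⟩
      · obtain ⟨Γ', Δ', rfl, hΓ', hΔ'⟩ := forall₂_append_split htail
        exact SuperLLG.tens (ih1 _ (List.Forall₂.cons (Or.inl rfl) hΓ'))
          (ih2 _ (List.Forall₂.cons (Or.inl rfl) hΔ'))
      · simp at hEq
  | parr h1 ih =>
    intro Ξ hΞ
    cases hΞ with
    | cons hhead htail =>
      rcases hhead with rfl | ⟨ei, e'i, hd, hEq, rfl⟩
      · exact SuperLLG.parr (ih _ (List.Forall₂.cons (Or.inl rfl)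
          (List.Forall₂.cons (Or.inl rfl) htail)))
      · simp at hEq
  | one b =>
    intro Ξ hΞ
    cases hΞ with
    | cons hhead htail =>
      cases htail
      rcases hhead with rfl | ⟨ei, e'i, hd, hEq, rfl⟩
      · exact SuperLLG.one b
      · simp at hEq
  | bot h1 ih =>
    intro Ξ hΞ
    cases hΞ with
    | cons hhead htail =>
      rcases hhead with rfl | ⟨ei, e'i, hd, hEq, rfl⟩
      · exact SuperLLG.bot (ih _ htail)
      · simp at hEq
  | awith h1 h2 ih1 ih2 =>
    intro Ξ hΞ
    cases hΞ with
    | cons hhead htail =>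
      rcases hhead with rfl | ⟨ei, e'i, hd, hEq, rfl⟩
      · exact SuperLLG.awith (ih1 _ (List.Forall₂.cons (Or.inl rfl) htail))
          (ih2 _ (List.Forall₂.cons (Or.inl rfl) htail))
      · simp at hEq
  | aplus1 h1 ih =>
    intro Ξ hΞ
    cases hΞ with
    | cons hhead htail =>
      rcases hhead with rfl | ⟨ei, e'i, hd, hEq, rfl⟩
      · exact SuperLLG.aplus1 (ih _ (List.Forall₂.cons (Or.inl rfl) htail))
      · simp at hEq
  | aplus2 h1 ih =>
    intro Ξ hΞ
    cases hΞ with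
    | cons hhead htail =>
      rcases hhead with rfl | ⟨ei, e'i, hd, hEq, rfl⟩
      · exact SuperLLG.aplus2 (ih _ (List.Forall₂.cons (Or.inl rfl) htail))
      · simp at hEq
  | top b Γ =>
    intro Ξ hΞ
    cases hΞ with
    | cons hhead htail =>
      rcases hhead with rfl | ⟨ei, e'i, hd, hEq, rfl⟩
      · exact SuperLLG.top b _
      · simp at hEq
  | @der b e0 A0 Γ0 hde h1 ih =>
    intro Ξ hΞ
    cases hΞ with
    | cons hhead htail =>
      rcases hhead with rfl | ⟨ei, e'i, hd, hEq, rfl⟩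
      · exact SuperLLG.der hde (ih _ (List.Forall₂.cons (Or.inl rfl) htail))
      · injection hEq with h1' h2'
        subst h1'; subst h2'
        have hco := gir2 e0 e e'i hde hd
        exact SuperLLG.con (l := [e]) hco (ih _ (List.Forall₂.cons (Or.inl rfl) htail))
  | @con b l e0 A0 Γ0 hco h1 ih =>
    intro Ξ hΞ
    cases hΞ with
    | cons hhead htail =>
      rcases hhead with rfl | ⟨ei, e'i, hd, hEq, rfl⟩
      · exact SuperLLG.con hco
          (ih _ (List.rel_append (digRel_refl e A _) htail))
      · injection hEq with h1' h2'
        subst h1'; subst h2'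
        obtain ⟨l', hfl, hco'⟩ := gir3 l e0 e e'i hco hd
        exact SuperLLG.con hco' (ih _ (List.rel_append (digRel_map hfl) htail))
  | @promg b e0 A0 eps es0 As hf hlen hp0 h1 ih =>
    intro Ξ hΞ
    cases hΞ with
    | cons hhead htail =>
      rcases hhead with rfl | ⟨ei, e'i, hd, hEq, rfl⟩
      · obtain ⟨eps', es', As', hz1, hz2, hz3, hz4, hz5⟩ :=
          zip_aux gir4 e A e0 hf As _ hlen htail
        rw [← hz5]
        exact SuperLLG.promg hz2 hz3 (by rw [hz4]; exact hp0)
          (ih _ (List.Forall₂.cons (Or.inl rfl) hz1))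
      · simp at hEq

end DigAux

/-- Admissibility of digging in the system with Girard's promotion, under the
Girardization axioms. -/
theorem superLLG_digging_admissible {E : Type}
    (de : E → Prop) (co : List E → E → Prop) (dg : E → E → E → Prop) (p : ℕ → E → Prop)
    (gir1 : ∀ e1 e2 e : E, dg e1 e2 e → p 1 e1)
    (gir2 : ∀ e1 e2 e : E, de e1 → dg e1 e2 e → co [e2] e)
    (gir3 : ∀ (l : List E) (e1 e2 e : E), co l e1 → dg e1 e2 e →
      ∃ l' : List E, List.Forall₂ (fun εi ε'i => dg εi e2 ε'i) l l' ∧ co l' e)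
    (gir4 : ∀ e1 e2 e3 e' e : E, dg e1 e2 e' → dg e' e3 e →
      ∃ e'' : E, dg e2 e3 e'' ∧ dg e1 e'' e)
    (gir5 : ∀ (n : ℕ) (e : E), 0 < n → p n e → ∃ e' : E, de e' ∧ dg e e' e)
    :
    (∀ (b : Bool) (e1 e2 e : E) (A : Formula E) (Γ : List (Formula E)), dg e1 e2 e →
      SuperLLG de co dg p b (Formula.wn e1 (Formula.wn e2 A) :: Γ) →
      SuperLLG de co dg p b (Formula.wn e A :: Γ)) ∧
    (∀ (b : Bool) (es es' : List E) (e : E) (A : Formula E) (Γ : List (Formula E)),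
      List.Forall₂ (fun ei e'i => dg ei e e'i) es es' →
      SuperLLG de co dg p b (es.map (fun ei => Formula.wn ei (Formula.wn e A)) ++ Γ) →
      SuperLLG de co dg p b (es'.map (fun e'i => Formula.wn e'i A) ++ Γ)) := by
  constructor
  · intro b e1 e2 e A Γ hdg h
    exact dig_main gir1 gir2 gir3 gir4 e2 A h (Formula.wn e A :: Γ)
      (List.Forall₂.cons (Or.inr ⟨e1, e, hdg, rfl, rfl⟩) (digRel_refl e2 A Γ))
  · intro b es es' e A Γ hf h
    exact dig_main gir1 gir2 gir3 gir4 e A h _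
      (List.rel_append (digRel_map hf) (digRel_refl e A Γ))


end SuperLLStmt
end

section
/- Girardization: if the parameters of superLL(E,de,co,dg,p) satisfy the Girardization axioms (gir1)–(gir5), then every sequent provable in superLL(E,de,co,dg,p) is provable in the system obtained by removing the functorial promotion rule and the digging rule and adding Girard's promotion rule (p_g); moreover if the original proof is cut-free, so is the resulting proof. -/
/-- The sequent calculus superLL(E, de, co, dg, p).  The `Bool` index records whether
the cut rule may be used (`true` = cut allowed, `false` = cut-free proofs only). -/
inductive SuperLL {E : Type} (de : E → Prop) (co : List E → E → Prop)
    (dg : E → E → E → Prop) (p : ℕ → E → Prop) : Bool → List (Formula E) → Prop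
  | ax (b) (A : Formula E) : SuperLL de co dg p b [A, A.dual]
  | ex {b Γ Δ} : SuperLL de co dg p b Γ → Γ.Perm Δ → SuperLL de co dg p b Δ
  | cut {A : Formula E} {Γ Δ : List (Formula E)} : SuperLL de co dg p true (A :: Γ) →
      SuperLL de co dg p true (A.dual :: Δ) → SuperLL de co dg p true (Γ ++ Δ)
  | tens {b} {A B : Formula E} {Γ Δ : List (Formula E)} : SuperLL de co dg p b (A :: Γ) → SuperLL de co dg p b (B :: Δ) →
      SuperLL de co dg p b (A.tens B :: (Γ ++ Δ))
  | parr {b} {A B : Formula E} {Γ : List (Formula E)} : SuperLL de co dg p b (A :: B :: Γ) →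
      SuperLL de co dg p b (A.parr B :: Γ)
  | one (b) : SuperLL de co dg p b [Formula.one]
  | bot {b Γ} : SuperLL de co dg p b Γ → SuperLL de co dg p b (Formula.bot :: Γ)
  | awith {b} {A B : Formula E} {Γ : List (Formula E)} : SuperLL de co dg p b (A :: Γ) → SuperLL de co dg p b (B :: Γ) →
      SuperLL de co dg p b (A.awith B :: Γ)
  | aplus1 {b} {A B : Formula E} {Γ : List (Formula E)} : SuperLL de co dg p b (A :: Γ) →
      SuperLL de co dg p b (A.aplus B :: Γ)
  | aplus2 {b} {A B : Formula E} {Γ : List (Formula E)} : SuperLL de co dg p b (B :: Γ) →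
      SuperLL de co dg p b (A.aplus B :: Γ)
  | top (b) (Γ) : SuperLL de co dg p b (Formula.top :: Γ)
  | der {b e A Γ} : de e → SuperLL de co dg p b (A :: Γ) →
      SuperLL de co dg p b (Formula.wn e A :: Γ)
  | con {b} {l : List E} {e A Γ} : co l e →
      SuperLL de co dg p b (l.map (fun ei => Formula.wn ei A) ++ Γ) →
      SuperLL de co dg p b (Formula.wn e A :: Γ)
  | dig {b e1 e2 e A Γ} : dg e1 e2 e →
      SuperLL de co dg p b (Formula.wn e1 (Formula.wn e2 A) :: Γ) →
      SuperLL de co dg p b (Formula.wn e A :: Γ)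
  | prom {b e A} {Δ : List (Formula E)} : p Δ.length e → SuperLL de co dg p b (A :: Δ) →
      SuperLL de co dg p b (Formula.oc e A :: Δ.map (Formula.wn e))

/-- superLL with Girard's promotion rule instead of functorial promotion and digging:
the functorial promotion and digging rules are removed and Girard's promotion `promg`
is added. -/
inductive SuperLLG {E : Type} (de : E → Prop) (co : List E → E → Prop)
    (dg : E → E → E → Prop) (p : ℕ → E → Prop) : Bool → List (Formula E) → Prop
  | ax (b) (A : Formula E) : SuperLLG de co dg p b [A, A.dual]
  | ex {b Γ Δ} : SuperLLG de co dg p b Γ → Γ.Perm Δ → SuperLLG de co dg p b Δ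
  | cut {A : Formula E} {Γ Δ : List (Formula E)} : SuperLLG de co dg p true (A :: Γ) →
      SuperLLG de co dg p true (A.dual :: Δ) → SuperLLG de co dg p true (Γ ++ Δ)
  | tens {b} {A B : Formula E} {Γ Δ : List (Formula E)} : SuperLLG de co dg p b (A :: Γ) →
      SuperLLG de co dg p b (B :: Δ) → SuperLLG de co dg p b (A.tens B :: (Γ ++ Δ))
  | parr {b} {A B : Formula E} {Γ : List (Formula E)} : SuperLLG de co dg p b (A :: B :: Γ) →
      SuperLLG de co dg p b (A.parr B :: Γ)
  | one (b) : SuperLLG de co dg p b [Formula.one]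
  | bot {b Γ} : SuperLLG de co dg p b Γ → SuperLLG de co dg p b (Formula.bot :: Γ)
  | awith {b} {A B : Formula E} {Γ : List (Formula E)} : SuperLLG de co dg p b (A :: Γ) →
      SuperLLG de co dg p b (B :: Γ) → SuperLLG de co dg p b (A.awith B :: Γ)
  | aplus1 {b} {A B : Formula E} {Γ : List (Formula E)} : SuperLLG de co dg p b (A :: Γ) →
      SuperLLG de co dg p b (A.aplus B :: Γ)
  | aplus2 {b} {A B : Formula E} {Γ : List (Formula E)} : SuperLLG de co dg p b (B :: Γ) →
      SuperLLG de co dg p b (A.aplus B :: Γ)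
  | top (b) (Γ) : SuperLLG de co dg p b (Formula.top :: Γ)
  | der {b e A Γ} : de e → SuperLLG de co dg p b (A :: Γ) →
      SuperLLG de co dg p b (Formula.wn e A :: Γ)
  | con {b} {l : List E} {e A Γ} : co l e →
      SuperLLG de co dg p b (l.map (fun ei => Formula.wn ei A) ++ Γ) →
      SuperLLG de co dg p b (Formula.wn e A :: Γ)
  | promg {b} {e : E} {A : Formula E} {eps es : List E} {As : List (Formula E)} :
      List.Forall₂ (fun εi ei => dg e εi ei) eps es → eps.length = As.length →
      p As.length e →
      SuperLLG de co dg p b (A :: List.zipWith Formula.wn eps As) →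
      SuperLLG de co dg p b (Formula.oc e A :: List.zipWith Formula.wn es As)

/-!
Digging is admissible once Girard's promotion is available: an instance of digging is pushed
up the derivation, where (gir2) turns it into a contraction when it meets a dereliction,
(gir3) into a contraction when it meets a contraction, (gir4) lets it be absorbed into the side
conditions of a Girard promotion, and (gir1) makes the η-expanded digging axiom
`⊢ ?_c A, !_a !_b A⊥` derivable by a Girard promotion. Functorial promotion is the special case
of Girard's promotion in which the context is first derelicted, which (gir5) permits.
-/

open List

theorem Formula.dual_dual {E : Type} (A : Formula E) : A.dual.dual = A := by
  induction A <;> simp [Formula.dual, *]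

theorem List.forall₂_append_left_iff {α β : Type*} {R : α → β → Prop} {l₁ l₂ : List α}
    {u : List β} :
    Forall₂ R (l₁ ++ l₂) u ↔ ∃ u₁ u₂, u = u₁ ++ u₂ ∧ Forall₂ R l₁ u₁ ∧ Forall₂ R l₂ u₂ := by
  refine ⟨fun h => ?_, fun ⟨u₁, u₂, hu, h₁, h₂⟩ => hu ▸ rel_append h₁ h₂⟩
  induction l₁ generalizing u with
  | nil => exact ⟨[], u, rfl, .nil, h⟩
  | cons a l₁ ih =>
    obtain _ | ⟨hab, h⟩ := h
    obtain ⟨u₁, u₂, rfl, h₁, h₂⟩ := ih h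
    exact ⟨_ :: u₁, u₂, rfl, .cons hab h₁, h₂⟩

section Steps

variable {E : Type} (dg : E → E → E → Prop)

/-- `Forall₂ (DigStep dg)` relates a sequent to the result of applying digging to any number of
its formulas at once; this simultaneous form is what survives contraction and promotion. -/
inductive DigStep : Formula E → Formula E → Prop
  | refl (B : Formula E) : DigStep B B
  | dig {a e c : E} (A : Formula E) : dg a e c → DigStep (.wn a (.wn e A)) (.wn c A)

/-- `Forall₂ (PromStep dg e) Δ Γ` says that `⊢ !_e A, Γ` follows from `⊢ A, Δ` by Girard's
promotion, given `p Γ.length e`. -/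
inductive PromStep (e : E) : Formula E → Formula E → Prop
  | wn {ε e' : E} (A : Formula E) : dg e ε e' → PromStep e (Formula.wn ε A) (Formula.wn e' A)

variable {dg}

theorem forall₂_digStep_refl (Γ : List (Formula E)) : Forall₂ (DigStep dg) Γ Γ :=
  forall₂_same.2 fun B _ => .refl B

theorem forall₂_promStep_iff {e : E} {Δ Γ : List (Formula E)} :
    Forall₂ (PromStep dg e) Δ Γ ↔ ∃ eps es As, Forall₂ (fun ε e' => dg e ε e') eps es ∧
      eps.length = As.length ∧ Δ = zipWith .wn eps As ∧ Γ = zipWith .wn es As := by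
  constructor
  · intro h
    induction h with
    | nil => exact ⟨[], [], [], .nil, rfl, rfl, rfl⟩
    | cons hstep _ ih =>
      obtain ⟨eps, es, As, hf, hlen, rfl, rfl⟩ := ih
      obtain ⟨A, hdg⟩ := hstep
      exact ⟨_ :: eps, _ :: es, A :: As, .cons hdg hf, by simp [hlen], rfl, rfl⟩
  · rintro ⟨eps, es, As, hf, hlen, rfl, rfl⟩
    induction hf generalizing As with
    | nil => exact .nil
    | cons hdg _ ih =>
      obtain _ | ⟨A, As⟩ := As
      · exact .nil
      · exact .cons (.wn A hdg) (ih As (by simpa using hlen))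

theorem PromStep.exists_digStep
    (gir4 : ∀ e1 e2 e3 e' e : E, dg e1 e2 e' → dg e' e3 e →
      ∃ e'' : E, dg e2 e3 e'' ∧ dg e1 e'' e)
    {e : E} {B C D : Formula E} (hBC : PromStep dg e B C) (hCD : DigStep dg C D) :
    ∃ B', DigStep dg B B' ∧ PromStep dg e B' D := by
  obtain ⟨A, hdg⟩ := hBC
  rcases hCD with _ | ⟨A, hdg'⟩
  · exact ⟨_, .refl _, .wn A hdg⟩
  · obtain ⟨e'', hdg₁, hdg₂⟩ := gir4 _ _ _ _ _ hdg hdg'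
    exact ⟨_, .dig A hdg₁, .wn A hdg₂⟩

theorem exists_forall₂_digStep_of_promStep
    (gir4 : ∀ e1 e2 e3 e' e : E, dg e1 e2 e' → dg e' e3 e →
      ∃ e'' : E, dg e2 e3 e'' ∧ dg e1 e'' e)
    {e : E} {Δ Γ Γ' : List (Formula E)} (hΔΓ : Forall₂ (PromStep dg e) Δ Γ)
    (hΓΓ' : Forall₂ (DigStep dg) Γ Γ') :
    ∃ Δ', Forall₂ (DigStep dg) Δ Δ' ∧ Forall₂ (PromStep dg e) Δ' Γ' := by
  induction hΔΓ generalizing Γ' with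
  | nil =>
    obtain rfl := forall₂_nil_left_iff.1 hΓΓ'
    exact ⟨[], .nil, .nil⟩
  | cons hstep _ ih =>
    obtain _ | ⟨hdig, hΓΓ'⟩ := hΓΓ'
    obtain ⟨B', hB, hB'⟩ := hstep.exists_digStep gir4 hdig
    obtain ⟨Δ', hΔ, hΔ'⟩ := ih hΓΓ'
    exact ⟨B' :: Δ', .cons hB hΔ, .cons hB' hΔ'⟩

end Steps

namespace SuperLLG

variable {E : Type} {de : E → Prop} {co : List E → E → Prop} {dg : E → E → E → Prop}
  {p : ℕ → E → Prop} {b : Bool}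

theorem promg_of_forall₂ {e : E} {A : Formula E} {Δ Γ : List (Formula E)}
    (hstep : Forall₂ (PromStep dg e) Δ Γ) (hp : p Γ.length e)
    (h : SuperLLG de co dg p b (A :: Δ)) : SuperLLG de co dg p b (.oc e A :: Γ) := by
  obtain ⟨eps, es, As, hf, hlen, rfl, rfl⟩ := forall₂_promStep_iff.1 hstep
  have hΓlen : (zipWith Formula.wn es As).length = As.length := by
    simp [← hf.length_eq, hlen]
  exact promg hf hlen (hΓlen ▸ hp) h

theorem der_map {e : E} (hde : de e) :
    ∀ {Δ Γ : List (Formula E)}, SuperLLG de co dg p b (Δ ++ Γ) →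
      SuperLLG de co dg p b (Δ.map (.wn e) ++ Γ)
  | [], _, h => h
  | B :: Δ, Γ, h => by
    have hB : SuperLLG de co dg p b (Δ ++ .wn e B :: Γ) := (der hde h).ex perm_middle.symm
    exact (der_map hde hB).ex perm_middle

theorem prom
    (gir5 : ∀ (n : ℕ) (e : E), 0 < n → p n e → ∃ e' : E, de e' ∧ dg e e' e)
    {e : E} {A : Formula E} {Δ : List (Formula E)} (hp : p Δ.length e)
    (h : SuperLLG de co dg p b (A :: Δ)) :
    SuperLLG de co dg p b (.oc e A :: Δ.map (.wn e)) := by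
  rcases Nat.eq_zero_or_pos Δ.length with hΔ | hΔ
  · obtain rfl := length_eq_zero_iff.1 hΔ
    exact promg_of_forall₂ .nil hp h
  obtain ⟨e', hde, hdg⟩ := gir5 _ e hΔ hp
  have hder : SuperLLG de co dg p b (A :: Δ.map (.wn e')) :=
    (der_map hde (h.ex (perm_append_singleton _ _).symm)).ex (perm_append_singleton _ _)
  have hstep : Forall₂ (PromStep dg e) (Δ.map (.wn e')) (Δ.map (.wn e)) := by
    simpa only [forall₂_map_left_iff, forall₂_map_right_iff] using
      forall₂_same.2 fun B _ => PromStep.wn (dg := dg) B hdg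
  exact promg_of_forall₂ hstep (by simpa using hp) hder

theorem dig_ax {a e c : E} (hdg : dg a e c) (hp : p 1 a) (A : Formula E) :
    SuperLLG de co dg p b [.wn c A, .oc a (.oc e A.dual)] := by
  have hax : SuperLLG de co dg p b [.oc e A.dual, .wn e A] := by
    simpa [Formula.dual, Formula.dual_dual] using ax (de := de) (co := co) b (.oc e A.dual)
  exact (promg_of_forall₂ (.cons (.wn A hdg) .nil) hp hax).ex (.swap _ _ _)

theorem ax_of_digStep (gir1 : ∀ e1 e2 e : E, dg e1 e2 e → p 1 e1)
    {A B C : Formula E} (hB : DigStep dg A B) (hC : DigStep dg A.dual C) :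
    SuperLLG de co dg p b [B, C] := by
  rcases hB with _ | @⟨a, e, c, X, hdg⟩
  · generalize hD : A.dual = D at hC
    rcases hC with _ | @⟨a, e, c, Y, hdg⟩
    · exact hD ▸ ax b A
    · have hA : A = .oc a (.oc e Y.dual) := by rw [← A.dual_dual, hD]; rfl
      exact hA ▸ (dig_ax hdg (gir1 _ _ _ hdg) Y).ex (.swap _ _ _)
  · rcases hC with _ | _
    exact dig_ax hdg (gir1 _ _ _ hdg) X

theorem of_forall₂_digStep
    (gir1 : ∀ e1 e2 e : E, dg e1 e2 e → p 1 e1)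
    (gir2 : ∀ e1 e2 e : E, de e1 → dg e1 e2 e → co [e2] e)
    (gir3 : ∀ (l : List E) (e1 e2 e : E), co l e1 → dg e1 e2 e →
      ∃ l' : List E, List.Forall₂ (fun εi ε'i => dg εi e2 ε'i) l l' ∧ co l' e)
    (gir4 : ∀ e1 e2 e3 e' e : E, dg e1 e2 e' → dg e' e3 e →
      ∃ e'' : E, dg e2 e3 e'' ∧ dg e1 e'' e)
    {Γ : List (Formula E)} (h : SuperLLG de co dg p b Γ) :
    ∀ {Γ' : List (Formula E)}, Forall₂ (DigStep dg) Γ Γ' → SuperLLG de co dg p b Γ' := by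
  induction h with
  | ax b A =>
    rintro _ (_ | ⟨hB, _ | ⟨hC, hnil⟩⟩)
    obtain rfl := forall₂_nil_left_iff.1 hnil
    exact ax_of_digStep gir1 hB hC
  | ex _ hπ ih =>
    intro Γ' hΓ'
    obtain ⟨Δ', hΔ', hπ'⟩ := perm_comp_forall₂ hπ hΓ'
    exact (ih hΔ').ex hπ'
  | cut _ _ ih₁ ih₂ =>
    intro Γ' hΓ'
    obtain ⟨Γ₁, Γ₂, rfl, h₁, h₂⟩ := forall₂_append_left_iff.1 hΓ'
    exact cut (ih₁ (.cons (.refl _) h₁)) (ih₂ (.cons (.refl _) h₂))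
  | tens _ _ ih₁ ih₂ =>
    rintro _ (_ | ⟨⟨⟩, hΓ'⟩)
    obtain ⟨Γ₁, Γ₂, rfl, h₁, h₂⟩ := forall₂_append_left_iff.1 hΓ'
    exact tens (ih₁ (.cons (.refl _) h₁)) (ih₂ (.cons (.refl _) h₂))
  | parr _ ih =>
    rintro _ (_ | ⟨⟨⟩, hΓ'⟩)
    exact parr (ih (.cons (.refl _) (.cons (.refl _) hΓ')))
  | one b =>
    rintro _ (_ | ⟨⟨⟩, hnil⟩)
    obtain rfl := forall₂_nil_left_iff.1 hnil
    exact one b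
  | bot _ ih =>
    rintro _ (_ | ⟨⟨⟩, hΓ'⟩)
    exact bot (ih hΓ')
  | awith _ _ ih₁ ih₂ =>
    rintro _ (_ | ⟨⟨⟩, hΓ'⟩)
    exact awith (ih₁ (.cons (.refl _) hΓ')) (ih₂ (.cons (.refl _) hΓ'))
  | aplus1 _ ih =>
    rintro _ (_ | ⟨⟨⟩, hΓ'⟩)
    exact aplus1 (ih (.cons (.refl _) hΓ'))
  | aplus2 _ ih =>
    rintro _ (_ | ⟨⟨⟩, hΓ'⟩)
    exact aplus2 (ih (.cons (.refl _) hΓ'))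
  | top b Γ =>
    rintro _ (_ | ⟨⟨⟩, _⟩)
    exact top b _
  | der hde _ ih =>
    rintro _ (_ | ⟨hB, hΓ'⟩)
    rcases hB with _ | ⟨A, hdg⟩
    · exact der hde (ih (.cons (.refl _) hΓ'))
    · exact con (l := [_]) (gir2 _ _ _ hde hdg) (ih (.cons (.refl _) hΓ'))
  | @con _ l _ _ _ hco _ ih =>
    rintro _ (_ | ⟨hB, hΓ'⟩)
    rcases hB with _ | @⟨_, e₂, _, A, hdg⟩
    · exact con hco (ih (rel_append (forall₂_digStep_refl _) hΓ'))
    · obtain ⟨l', hl', hco'⟩ := gir3 _ _ _ _ hco hdg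
      have hdigs : Forall₂ (DigStep dg) (l.map fun ε => .wn ε (.wn e₂ A)) (l'.map (.wn · A)) := by
        simpa only [forall₂_map_left_iff, forall₂_map_right_iff] using
          hl'.imp fun _ _ => DigStep.dig A
      exact con hco' (ih (rel_append hdigs hΓ'))
  | promg hf hlen hp _ ih =>
    rintro _ (_ | ⟨⟨⟩, hΓ'⟩)
    obtain ⟨Δ', hΔ', hstep⟩ := exists_forall₂_digStep_of_promStep gir4
      (forall₂_promStep_iff.2 ⟨_, _, _, hf, hlen, rfl, rfl⟩) hΓ'
    refine promg_of_forall₂ hstep ?_ (ih (.cons (.refl _) hΔ'))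
    simpa [← hΓ'.length_eq, ← hf.length_eq, hlen] using hp

theorem dig
    (gir1 : ∀ e1 e2 e : E, dg e1 e2 e → p 1 e1)
    (gir2 : ∀ e1 e2 e : E, de e1 → dg e1 e2 e → co [e2] e)
    (gir3 : ∀ (l : List E) (e1 e2 e : E), co l e1 → dg e1 e2 e →
      ∃ l' : List E, List.Forall₂ (fun εi ε'i => dg εi e2 ε'i) l l' ∧ co l' e)
    (gir4 : ∀ e1 e2 e3 e' e : E, dg e1 e2 e' → dg e' e3 e →
      ∃ e'' : E, dg e2 e3 e'' ∧ dg e1 e'' e)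
    {e1 e2 e : E} {A : Formula E} {Γ : List (Formula E)} (hdg : dg e1 e2 e)
    (h : SuperLLG de co dg p b (.wn e1 (.wn e2 A) :: Γ)) :
    SuperLLG de co dg p b (.wn e A :: Γ) :=
  h.of_forall₂_digStep gir1 gir2 gir3 gir4 (.cons (.dig A hdg) (forall₂_digStep_refl Γ))

end SuperLLG

/-- Girardization: under the Girardization axioms, every sequent provable in superLL is
provable with Girard's promotion instead of functorial promotion and digging, and
cut-freeness is preserved. -/
theorem superLL_girardization {E : Type}
    (de : E → Prop) (co : List E → E → Prop) (dg : E → E → E → Prop) (p : ℕ → E → Prop)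
    (gir1 : ∀ e1 e2 e : E, dg e1 e2 e → p 1 e1)
    (gir2 : ∀ e1 e2 e : E, de e1 → dg e1 e2 e → co [e2] e)
    (gir3 : ∀ (l : List E) (e1 e2 e : E), co l e1 → dg e1 e2 e →
      ∃ l' : List E, List.Forall₂ (fun εi ε'i => dg εi e2 ε'i) l l' ∧ co l' e)
    (gir4 : ∀ e1 e2 e3 e' e : E, dg e1 e2 e' → dg e' e3 e →
      ∃ e'' : E, dg e2 e3 e'' ∧ dg e1 e'' e)
    (gir5 : ∀ (n : ℕ) (e : E), 0 < n → p n e → ∃ e' : E, de e' ∧ dg e e' e)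
    :
    ∀ (b : Bool) (Γ : List (Formula E)),
      SuperLL de co dg p b Γ → SuperLLG de co dg p b Γ := by
  intro b Γ h
  induction h with
  | ax b A => exact .ax b A
  | ex _ hπ ih => exact ih.ex hπ
  | cut _ _ ih₁ ih₂ => exact .cut ih₁ ih₂
  | tens _ _ ih₁ ih₂ => exact .tens ih₁ ih₂
  | parr _ ih => exact .parr ih
  | one b => exact .one b
  | bot _ ih => exact .bot ih
  | awith _ _ ih₁ ih₂ => exact .awith ih₁ ih₂
  | aplus1 _ ih => exact .aplus1 ih
  | aplus2 _ ih => exact .aplus2 ih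
  | top b Γ => exact .top b Γ
  | der hde _ ih => exact .der hde ih
  | con hco _ ih => exact .con hco ih
  | dig hdg _ ih => exact ih.dig gir1 gir2 gir3 gir4 hdg
  | prom hp _ ih => exact ih.prom gir5 hp
end

section
/- Admissibility of Subsumption: assume the parameters of superLL satisfy the subsumption axioms (sb1)–(sb6). Consider the system obtained from superLL(E,de,co,dg,p) by removing the functorial promotion rule (p) and the unary contraction (subsumption) rule (co with k = 1) and adding the ordered promotion rule (p_≤). Then subsumption is admissible in this system: if ⊢ ?_{e1}A, Γ is provable in it and e1 ≤ e'1 (i.e. co_1(e1,e'1)), then ⊢ ?_{e'1}A, Γ is provable in it. More generally, if ⊢ ?_{e1}A1,…,?_{en}An, Γ is provable in it and ei ≤ e'i for all 1 ≤ i ≤ n, then ⊢ ?_{e'1}A1,…,?_{e'n}An, Γ is provable in it. -/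
namespace SuperLLStmt

/-- superLL with the ordered promotion rule instead of functorial promotion, and with
the unary contraction (subsumption) rule removed (contraction is restricted to arities
`≠ 1`). -/
inductive SuperLLO {E : Type} (de : E → Prop) (co : List E → E → Prop)
    (dg : E → E → E → Prop) (p : ℕ → E → Prop) : Bool → List (Formula E) → Prop
  | ax (b) (A : Formula E) : SuperLLO de co dg p b [A, A.dual]
  | ex {b Γ Δ} : SuperLLO de co dg p b Γ → Γ.Perm Δ → SuperLLO de co dg p b Δ
  | cut {A : Formula E} {Γ Δ : List (Formula E)} : SuperLLO de co dg p true (A :: Γ) →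
      SuperLLO de co dg p true (A.dual :: Δ) → SuperLLO de co dg p true (Γ ++ Δ)
  | tens {b} {A B : Formula E} {Γ Δ : List (Formula E)} : SuperLLO de co dg p b (A :: Γ) →
      SuperLLO de co dg p b (B :: Δ) → SuperLLO de co dg p b (A.tens B :: (Γ ++ Δ))
  | parr {b} {A B : Formula E} {Γ : List (Formula E)} : SuperLLO de co dg p b (A :: B :: Γ) →
      SuperLLO de co dg p b (A.parr B :: Γ)
  | one (b) : SuperLLO de co dg p b [Formula.one]
  | bot {b Γ} : SuperLLO de co dg p b Γ → SuperLLO de co dg p b (Formula.bot :: Γ)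
  | awith {b} {A B : Formula E} {Γ : List (Formula E)} : SuperLLO de co dg p b (A :: Γ) →
      SuperLLO de co dg p b (B :: Γ) → SuperLLO de co dg p b (A.awith B :: Γ)
  | aplus1 {b} {A B : Formula E} {Γ : List (Formula E)} : SuperLLO de co dg p b (A :: Γ) →
      SuperLLO de co dg p b (A.aplus B :: Γ)
  | aplus2 {b} {A B : Formula E} {Γ : List (Formula E)} : SuperLLO de co dg p b (B :: Γ) →
      SuperLLO de co dg p b (A.aplus B :: Γ)
  | top (b) (Γ) : SuperLLO de co dg p b (Formula.top :: Γ)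
  | der {b e A Γ} : de e → SuperLLO de co dg p b (A :: Γ) →
      SuperLLO de co dg p b (Formula.wn e A :: Γ)
  | con {b} {l : List E} {e A Γ} : co l e → l.length ≠ 1 →
      SuperLLO de co dg p b (l.map (fun ei => Formula.wn ei A) ++ Γ) →
      SuperLLO de co dg p b (Formula.wn e A :: Γ)
  | dig {b e1 e2 e A Γ} : dg e1 e2 e →
      SuperLLO de co dg p b (Formula.wn e1 (Formula.wn e2 A) :: Γ) →
      SuperLLO de co dg p b (Formula.wn e A :: Γ)
  | promle {b} {e : E} {A : Formula E} {es : List E} {As : List (Formula E)} :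
      (∀ ei ∈ es, co [e] ei) → es.length = As.length → p As.length e →
      SuperLLO de co dg p b (A :: As) →
      SuperLLO de co dg p b (Formula.oc e A :: List.zipWith Formula.wn es As)

/-! Induct on the derivation, raising the indices of several `?`-formulas of the conclusion at
once (contraction turns one raised `?_e A` into several raised `?_{εi} A` in its premise). Each
exponential rule absorbs the raise through its subsumption axiom: (sb4) for dereliction, (sb5)
for contraction, (sb6) for digging, and (sb3) keeps the side condition of ordered promotion. The
only other case is an axiom `⊢ ?_e B, !_e B⊥` whose `?_e B` is raised to `?_{e'} B`: that sequent
is an ordered promotion of the axiom `⊢ B⊥, B`, which (sb1) allows. -/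

theorem _root_.List.forall₂_append_left_iff_s7 {α β : Type*} {R : α → β → Prop}
    {l₁ l₂ : List α} {l : List β} :
    List.Forall₂ R (l₁ ++ l₂) l ↔
      ∃ m₁ m₂, List.Forall₂ R l₁ m₁ ∧ List.Forall₂ R l₂ m₂ ∧ l = m₁ ++ m₂ := by
  refine ⟨fun h => ⟨l.take l₁.length, l.drop l₁.length, ?_, ?_, (List.take_append_drop _ _).symm⟩,
    fun ⟨m₁, m₂, h₁, h₂, hl⟩ => hl ▸ List.rel_append h₁ h₂⟩
  · simpa using List.forall₂_take l₁.length h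
  · simpa using List.forall₂_drop l₁.length h

variable {E : Type}

namespace Formula

theorem dual_dual_s7 (A : Formula E) : A.dual.dual = A := by
  induction A <;> simp [dual, *]

theorem eq_oc_of_dual_eq_wn {A B : Formula E} {e : E} (h : A.dual = wn e B) :
    A = oc e B.dual := by
  rw [← dual_dual_s7 A, h]
  rfl

inductive WnLe (co : List E → E → Prop) : Formula E → Formula E → Prop
  | refl (A : Formula E) : WnLe co A A
  | wn {e e' : E} (A : Formula E) : co [e] e' → WnLe co (wn e A) (wn e' A)

instance (co : List E → E → Prop) : Std.Refl (WnLe co) := ⟨WnLe.refl⟩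

theorem forall₂_wnLe_zipWith_wn {co : List E → E → Prop} {es es' : List E}
    (hes : List.Forall₂ (fun e e' => co [e] e') es es') (As : List (Formula E)) :
    List.Forall₂ (WnLe co) (List.zipWith wn es As) (List.zipWith wn es' As) := by
  induction hes generalizing As with
  | nil => simp
  | cons hle _ ih =>
    cases As with
    | nil => simp
    | cons A As => exact .cons (.wn A hle) (ih As)

theorem exists_zipWith_wn_of_forall₂_wnLe {co : List E → E → Prop}
    (sb3 : ∀ e1 e2 e3 : E, co [e1] e2 → co [e2] e3 → co [e1] e3) {e : E} :
    ∀ {es : List E} {As Δ : List (Formula E)}, (∀ ei ∈ es, co [e] ei) →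
      es.length = As.length → List.Forall₂ (WnLe co) (List.zipWith wn es As) Δ →
      ∃ es', (∀ ei ∈ es', co [e] ei) ∧ es'.length = As.length ∧ Δ = List.zipWith wn es' As
  | [], [], _, _, _, .nil => ⟨[], by simp, rfl, rfl⟩
  | e₀ :: es, A :: As, _, hes, hlen, .cons hC hΔ => by
    rw [List.forall_mem_cons] at hes
    obtain ⟨es', hes', hlen', rfl⟩ :=
      exists_zipWith_wn_of_forall₂_wnLe sb3 hes.2 (Nat.succ.inj hlen) hΔ
    cases hC with
    | refl => exact ⟨e₀ :: es', List.forall_mem_cons.2 ⟨hes.1, hes'⟩, by simp [hlen'], rfl⟩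
    | wn _ hle =>
      exact ⟨_ :: es', List.forall_mem_cons.2 ⟨sb3 _ _ _ hes.1 hle, hes'⟩, by simp [hlen'], rfl⟩

end Formula

open Formula

namespace SuperLLO

variable {de : E → Prop} {co : List E → E → Prop} {dg : E → E → E → Prop} {p : ℕ → E → Prop}

theorem oc_dual_wn_of_le (sb1 : ∀ e : E, p 1 e) {e e' : E} (hle : co [e] e') (b : Bool)
    (A : Formula E) : SuperLLO de co dg p b [oc e A.dual, wn e' A] :=
  promle (es := [e']) (As := [A]) (by simpa using hle) rfl (sb1 e) (.ex (.ax b A) (.swap _ _ _))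

theorem of_wnLe_of_wnLe_dual (sb1 : ∀ e : E, p 1 e) {A C D : Formula E} (hC : WnLe co A C)
    (hD : WnLe co A.dual D) (b : Bool) : SuperLLO de co dg p b [C, D] := by
  cases hC with
  | refl =>
    generalize hA : A.dual = A' at hD
    cases hD with
    | refl => exact hA ▸ ax b A
    | wn B hle => exact eq_oc_of_dual_eq_wn hA ▸ oc_dual_wn_of_le sb1 hle b B
  | wn B hle =>
    cases hD
    exact .ex (oc_dual_wn_of_le sb1 hle b B) (.swap _ _ _)

theorem of_forall₂_wnLe
    (sb1 : ∀ e : E, p 1 e)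
    (sb3 : ∀ e1 e2 e3 : E, co [e1] e2 → co [e2] e3 → co [e1] e3)
    (sb4 : ∀ e1 e2 : E, de e1 → co [e1] e2 → de e2)
    (sb5 : ∀ (l : List E) (e1 e2 : E), co l e1 → co [e1] e2 →
      ∃ l' : List E, List.Forall₂ (fun εi ε'i => co [εi] ε'i) l l' ∧ co l' e2)
    (sb6 : ∀ ε1 ε2 e1 e2 : E, dg ε1 ε2 e1 → co [e1] e2 →
      ∃ ε'1 : E, co [ε1] ε'1 ∧ dg ε'1 ε2 e2)
    {b : Bool} {Δ Δ' : List (Formula E)} (h : SuperLLO de co dg p b Δ)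
    (hΔ : List.Forall₂ (WnLe co) Δ Δ') : SuperLLO de co dg p b Δ' := by
  induction h generalizing Δ' with
  | ax b A =>
    rcases hΔ with _ | ⟨hC, _ | ⟨hD, ⟨⟩⟩⟩
    exact of_wnLe_of_wnLe_dual sb1 hC hD b
  | ex _ hperm ih =>
    obtain ⟨Γ', hΓ, hperm'⟩ := List.perm_comp_forall₂ hperm hΔ
    exact .ex (ih hΓ) hperm'
  | cut _ _ ih₁ ih₂ =>
    obtain ⟨Γ', Θ', hΓ, hΘ, rfl⟩ := List.forall₂_append_left_iff_s7.1 hΔ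
    exact .cut (ih₁ (.cons (.refl _) hΓ)) (ih₂ (.cons (.refl _) hΘ))
  | tens _ _ ih₁ ih₂ =>
    rcases hΔ with _ | ⟨⟨⟩, hΔ⟩
    obtain ⟨Γ', Θ', hΓ, hΘ, rfl⟩ := List.forall₂_append_left_iff_s7.1 hΔ
    exact .tens (ih₁ (.cons (.refl _) hΓ)) (ih₂ (.cons (.refl _) hΘ))
  | parr _ ih =>
    rcases hΔ with _ | ⟨⟨⟩, hΔ⟩
    exact .parr (ih (.cons (.refl _) (.cons (.refl _) hΔ)))
  | one b =>
    rcases hΔ with _ | ⟨⟨⟩, ⟨⟩⟩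
    exact .one b
  | bot _ ih =>
    rcases hΔ with _ | ⟨⟨⟩, hΔ⟩
    exact .bot (ih hΔ)
  | awith _ _ ih₁ ih₂ =>
    rcases hΔ with _ | ⟨⟨⟩, hΔ⟩
    exact .awith (ih₁ (.cons (.refl _) hΔ)) (ih₂ (.cons (.refl _) hΔ))
  | aplus1 _ ih =>
    rcases hΔ with _ | ⟨⟨⟩, hΔ⟩
    exact .aplus1 (ih (.cons (.refl _) hΔ))
  | aplus2 _ ih =>
    rcases hΔ with _ | ⟨⟨⟩, hΔ⟩
    exact .aplus2 (ih (.cons (.refl _) hΔ))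
  | top b _ =>
    rcases hΔ with _ | ⟨⟨⟩, -⟩
    exact .top b _
  | der hde _ ih =>
    rcases hΔ with _ | ⟨hC, hΔ⟩
    cases hC with
    | refl => exact .der hde (ih (.cons (.refl _) hΔ))
    | wn _ hle => exact .der (sb4 _ _ hde hle) (ih (.cons (.refl _) hΔ))
  | con hco hlen _ ih =>
    rcases hΔ with _ | ⟨hC, hΔ⟩
    cases hC with
    | refl => exact .con hco hlen (ih (List.rel_append (List.forall₂_refl _) hΔ))
    | wn _ hle =>
      obtain ⟨l', hl', hco'⟩ := sb5 _ _ _ hco hle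
      refine .con hco' (hl'.length_eq ▸ hlen) (ih (List.rel_append ?_ hΔ))
      rw [List.forall₂_map_left_iff, List.forall₂_map_right_iff]
      exact hl'.imp fun _ _ => .wn _
  | dig hdg _ ih =>
    rcases hΔ with _ | ⟨hC, hΔ⟩
    cases hC with
    | refl => exact .dig hdg (ih (.cons (.refl _) hΔ))
    | wn _ hle =>
      obtain ⟨ε', hε', hdg'⟩ := sb6 _ _ _ _ hdg hle
      exact .dig hdg' (ih (.cons (.wn _ hε') hΔ))
  | promle hes hlen hp hA =>
    rcases hΔ with _ | ⟨⟨⟩, hΔ⟩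
    obtain ⟨es', hes', hlen', rfl⟩ := exists_zipWith_wn_of_forall₂_wnLe sb3 hes hlen hΔ
    exact .promle hes' hlen' hp hA

end SuperLLO

theorem superLLO_subsumption_admissible_general {E : Type}
    (de : E → Prop) (co : List E → E → Prop) (dg : E → E → E → Prop) (p : ℕ → E → Prop)
    (sb1 : ∀ e : E, p 1 e)
    (sb3 : ∀ e1 e2 e3 : E, co [e1] e2 → co [e2] e3 → co [e1] e3)
    (sb4 : ∀ e1 e2 : E, de e1 → co [e1] e2 → de e2)
    (sb5 : ∀ (l : List E) (e1 e2 : E), co l e1 → co [e1] e2 →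
      ∃ l' : List E, List.Forall₂ (fun εi ε'i => co [εi] ε'i) l l' ∧ co l' e2)
    (sb6 : ∀ ε1 ε2 e1 e2 : E, dg ε1 ε2 e1 → co [e1] e2 →
      ∃ ε'1 : E, co [ε1] ε'1 ∧ dg ε'1 ε2 e2)
    :
    (∀ (b : Bool) (e1 e1' : E) (A : Formula E) (Γ : List (Formula E)), co [e1] e1' →
      SuperLLO de co dg p b (Formula.wn e1 A :: Γ) →
      SuperLLO de co dg p b (Formula.wn e1' A :: Γ)) ∧
    (∀ (b : Bool) (es es' : List E) (As : List (Formula E)) (Γ : List (Formula E)),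
      es.length = As.length →
      List.Forall₂ (fun ei e'i => co [ei] e'i) es es' →
      SuperLLO de co dg p b (List.zipWith Formula.wn es As ++ Γ) →
      SuperLLO de co dg p b (List.zipWith Formula.wn es' As ++ Γ)) :=
  ⟨fun _ _ _ A Γ hle h =>
      h.of_forall₂_wnLe sb1 sb3 sb4 sb5 sb6 (.cons (.wn A hle) (List.forall₂_refl Γ)),
    fun _ _ _ As Γ _ hes h =>
      h.of_forall₂_wnLe sb1 sb3 sb4 sb5 sb6
        (List.rel_append (forall₂_wnLe_zipWith_wn hes As) (List.forall₂_refl Γ))⟩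

/-- Admissibility of subsumption in the system with the ordered promotion rule, under
the subsumption axioms (here `e ≤ e'` is `co [e] e'`). -/
theorem superLLO_subsumption_admissible {E : Type}
    (de : E → Prop) (co : List E → E → Prop) (dg : E → E → E → Prop) (p : ℕ → E → Prop)
    (sb1 : ∀ e : E, p 1 e)
    (sb2 : ∀ e : E, co [e] e)
    (sb3 : ∀ e1 e2 e3 : E, co [e1] e2 → co [e2] e3 → co [e1] e3)
    (sb4 : ∀ e1 e2 : E, de e1 → co [e1] e2 → de e2)
    (sb5 : ∀ (l : List E) (e1 e2 : E), co l e1 → co [e1] e2 →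
      ∃ l' : List E, List.Forall₂ (fun εi ε'i => co [εi] ε'i) l l' ∧ co l' e2)
    (sb6 : ∀ ε1 ε2 e1 e2 : E, dg ε1 ε2 e1 → co [e1] e2 →
      ∃ ε'1 : E, co [ε1] ε'1 ∧ dg ε'1 ε2 e2)
    :
    (∀ (b : Bool) (e1 e1' : E) (A : Formula E) (Γ : List (Formula E)), co [e1] e1' →
      SuperLLO de co dg p b (Formula.wn e1 A :: Γ) →
      SuperLLO de co dg p b (Formula.wn e1' A :: Γ)) ∧
    (∀ (b : Bool) (es es' : List E) (As : List (Formula E)) (Γ : List (Formula E)),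
      es.length = As.length →
      List.Forall₂ (fun ei e'i => co [ei] e'i) es es' →
      SuperLLO de co dg p b (List.zipWith Formula.wn es As ++ Γ) →
      SuperLLO de co dg p b (List.zipWith Formula.wn es' As ++ Γ)) :=
  superLLO_subsumption_admissible_general de co dg p sb1 sb3 sb4 sb5 sb6

end SuperLLStmt
end

section
/- LL with functorial promotion as an instance of superLL: consider the instance of superLL with E = {•}, de(•) true, co_0(•) true, co_2(•,•,•) true (all other co_k false), dg(•,•,•) true, and p_n(•) true for all n. Then (i) this instance satisfies the cut-elimination axioms (ce1)–(ce3) and the expansion axiom (ea), and (ii) a sequent is provable in this instance if and only if it is provable in LL_fun, the presentation of linear logic with functorial promotion and digging; moreover cut-free provability is preserved in both directions. -/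
inductive LLfun : Bool → List (Formula Unit) → Prop
  | ax (b) (A : Formula Unit) : LLfun b [A, A.dual]
  | ex {b Γ Δ} : LLfun b Γ → Γ.Perm Δ → LLfun b Δ
  | cut {A : Formula Unit} {Γ Δ : List (Formula Unit)} :
      LLfun true (A :: Γ) → LLfun true (A.dual :: Δ) → LLfun true (Γ ++ Δ)
  | tens {b} {A B : Formula Unit} {Γ Δ : List (Formula Unit)} :
      LLfun b (A :: Γ) → LLfun b (B :: Δ) → LLfun b (A.tens B :: (Γ ++ Δ))
  | parr {b} {A B : Formula Unit} {Γ : List (Formula Unit)} :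
      LLfun b (A :: B :: Γ) → LLfun b (A.parr B :: Γ)
  | one (b) : LLfun b [Formula.one]
  | bot {b Γ} : LLfun b Γ → LLfun b (Formula.bot :: Γ)
  | awith {b} {A B : Formula Unit} {Γ : List (Formula Unit)} :
      LLfun b (A :: Γ) → LLfun b (B :: Γ) → LLfun b (A.awith B :: Γ)
  | aplus1 {b} {A B : Formula Unit} {Γ : List (Formula Unit)} :
      LLfun b (A :: Γ) → LLfun b (A.aplus B :: Γ)
  | aplus2 {b} {A B : Formula Unit} {Γ : List (Formula Unit)} :
      LLfun b (B :: Γ) → LLfun b (A.aplus B :: Γ)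
  | top (b) (Γ) : LLfun b (Formula.top :: Γ)
  | promf {b} {A : Formula Unit} {Δ : List (Formula Unit)} :
      LLfun b (A :: Δ) → LLfun b (Formula.oc () A :: Δ.map (Formula.wn ()))
  | dig {b} {A : Formula Unit} {Γ : List (Formula Unit)} :
      LLfun b (Formula.wn () (Formula.wn () A) :: Γ) → LLfun b (Formula.wn () A :: Γ)
  | der {b} {A : Formula Unit} {Γ : List (Formula Unit)} :
      LLfun b (A :: Γ) → LLfun b (Formula.wn () A :: Γ)
  | wk {b} {A : Formula Unit} {Γ : List (Formula Unit)} :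
      LLfun b Γ → LLfun b (Formula.wn () A :: Γ)
  | ctr {b} {A : Formula Unit} {Γ : List (Formula Unit)} :
      LLfun b (Formula.wn () A :: Formula.wn () A :: Γ) → LLfun b (Formula.wn () A :: Γ)

/-- The LL-with-functorial-promotion instance of superLL: `E = {•}`, `de(•)`,
`co_0(•)`, `co_2(•,•,•)`, `dg(•,•,•)` and `p_n(•)` true for all `n` (other `co_k`
false). -/
def deLLf : Unit → Prop := fun _ => True
def coLLf : List Unit → Unit → Prop := fun l _ => l.length = 0 ∨ l.length = 2
def dgLLf : Unit → Unit → Unit → Prop := fun _ _ _ => True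
def pLLf : ℕ → Unit → Prop := fun _ _ => True

/-- LL with functorial promotion as an instance of superLL: the instance satisfies the
cut-elimination axioms and the expansion axiom, and provability (and cut-free
provability) coincides with LL_fun. -/
theorem superLL_LLfun_instance :
    ((∀ (m n : ℕ) (e : Unit), 0 < m → pLLf m e → pLLf n e → pLLf (m + n - 1) e) ∧
    (∀ (l : List Unit) (e : Unit), coLLf l e → ∀ n : ℕ, pLLf n e → ∀ ei ∈ l, pLLf n ei) ∧
    (∀ e1 e2 e : Unit, dgLLf e1 e2 e → ∀ n : ℕ, pLLf n e → pLLf n e1 ∧ pLLf n e2)) ∧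
    (∀ e : Unit, pLLf 1 e) ∧
    (∀ (b : Bool) (Γ : List (Formula Unit)),
      SuperLL deLLf coLLf dgLLf pLLf b Γ ↔ LLfun b Γ) := by
  refine ⟨⟨fun _ _ _ _ _ _ => trivial, fun _ _ _ _ _ _ _ => trivial,
    fun _ _ _ _ _ _ => ⟨trivial, trivial⟩⟩, fun _ => trivial, fun b Γ => ⟨fun h => ?_, fun h => ?_⟩⟩
  · induction h with
    | ax b A => exact LLfun.ax b A
    | ex _ hp ih => exact LLfun.ex ih hp
    | cut _ _ ih1 ih2 => exact LLfun.cut ih1 ih2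
    | tens _ _ ih1 ih2 => exact LLfun.tens ih1 ih2
    | parr _ ih => exact LLfun.parr ih
    | one b => exact LLfun.one b
    | bot _ ih => exact LLfun.bot ih
    | awith _ _ ih1 ih2 => exact LLfun.awith ih1 ih2
    | aplus1 _ ih => exact LLfun.aplus1 ih
    | aplus2 _ ih => exact LLfun.aplus2 ih
    | top b Γ => exact LLfun.top b Γ
    | der _ _ ih => exact LLfun.der ih
    | con hco _ ih =>
        rcases hco with h0 | h2
        · obtain rfl := List.eq_nil_of_length_eq_zero h0
          exact LLfun.wk ih
        · obtain ⟨⟨⟩, ⟨⟩, rfl⟩ := List.length_eq_two.mp h2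
          exact LLfun.ctr ih
    | dig _ _ ih => exact LLfun.dig ih
    | prom _ _ ih => exact LLfun.promf ih
  · induction h with
    | ax b A => exact SuperLL.ax b A
    | ex _ hp ih => exact SuperLL.ex ih hp
    | cut _ _ ih1 ih2 => exact SuperLL.cut ih1 ih2
    | tens _ _ ih1 ih2 => exact SuperLL.tens ih1 ih2
    | parr _ ih => exact SuperLL.parr ih
    | one b => exact SuperLL.one b
    | bot _ ih => exact SuperLL.bot ih
    | awith _ _ ih1 ih2 => exact SuperLL.awith ih1 ih2
    | aplus1 _ ih => exact SuperLL.aplus1 ih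
    | aplus2 _ ih => exact SuperLL.aplus2 ih
    | top b Γ => exact SuperLL.top b Γ
    | promf _ ih => exact SuperLL.prom trivial ih
    | dig _ ih => exact SuperLL.dig trivial ih
    | der _ ih => exact SuperLL.der trivial ih
    | wk _ ih => exact SuperLL.con (l := []) (Or.inl rfl) ih
    | ctr _ ih => exact SuperLL.con (l := [(), ()]) (Or.inr rfl) ih
end

section
/- ELL as an instance of superLL: consider the instance of superLL with E = {•}, de empty (always false), co_0(•) true, co_2(•,•,•) true (all other co_k false), dg empty (always false), and p_n(•) true for all n. Then (i) this instance satisfies the cut-elimination axioms (ce1)–(ce3) and the expansion axiom (ea), and (ii) writing !A := !_• A and ?A := ?_• A, a sequent is provable in this instance if and only if it is provable in ELL; moreover cut-free provability is preserved in both directions. -/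
inductive ELL : Bool → List (Formula Unit) → Prop
  | ax (b) (A : Formula Unit) : ELL b [A, A.dual]
  | ex {b Γ Δ} : ELL b Γ → Γ.Perm Δ → ELL b Δ
  | cut {A : Formula Unit} {Γ Δ : List (Formula Unit)} :
      ELL true (A :: Γ) → ELL true (A.dual :: Δ) → ELL true (Γ ++ Δ)
  | tens {b} {A B : Formula Unit} {Γ Δ : List (Formula Unit)} :
      ELL b (A :: Γ) → ELL b (B :: Δ) → ELL b (A.tens B :: (Γ ++ Δ))
  | parr {b} {A B : Formula Unit} {Γ : List (Formula Unit)} :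
      ELL b (A :: B :: Γ) → ELL b (A.parr B :: Γ)
  | one (b) : ELL b [Formula.one]
  | bot {b Γ} : ELL b Γ → ELL b (Formula.bot :: Γ)
  | awith {b} {A B : Formula Unit} {Γ : List (Formula Unit)} :
      ELL b (A :: Γ) → ELL b (B :: Γ) → ELL b (A.awith B :: Γ)
  | aplus1 {b} {A B : Formula Unit} {Γ : List (Formula Unit)} :
      ELL b (A :: Γ) → ELL b (A.aplus B :: Γ)
  | aplus2 {b} {A B : Formula Unit} {Γ : List (Formula Unit)} :
      ELL b (B :: Γ) → ELL b (A.aplus B :: Γ)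
  | top (b) (Γ) : ELL b (Formula.top :: Γ)
  | promf {b} {A : Formula Unit} {Δ : List (Formula Unit)} :
      ELL b (A :: Δ) → ELL b (Formula.oc () A :: Δ.map (Formula.wn ()))
  | wk {b} {A : Formula Unit} {Γ : List (Formula Unit)} :
      ELL b Γ → ELL b (Formula.wn () A :: Γ)
  | ctr {b} {A : Formula Unit} {Γ : List (Formula Unit)} :
      ELL b (Formula.wn () A :: Formula.wn () A :: Γ) → ELL b (Formula.wn () A :: Γ)

/-- The ELL instance of superLL: `E = {•}`, `de` and `dg` empty, `co_0(•)` and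
`co_2(•,•,•)` true (other `co_k` false), `p_n(•)` true for all `n`. -/
def deELL : Unit → Prop := fun _ => False
def coELL : List Unit → Unit → Prop := fun l _ => l.length = 0 ∨ l.length = 2
def dgELL : Unit → Unit → Unit → Prop := fun _ _ _ => False
def pELL : ℕ → Unit → Prop := fun _ _ => True

lemma superLL_to_ELL {b Γ} (h : SuperLL deELL coELL dgELL pELL b Γ) : ELL b Γ := by
  induction h with
  | ax b A => exact ELL.ax b A
  | ex _ hp ih => exact ELL.ex ih hp
  | cut _ _ ih1 ih2 => exact ELL.cut ih1 ih2
  | tens _ _ ih1 ih2 => exact ELL.tens ih1 ih2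
  | parr _ ih => exact ELL.parr ih
  | one b => exact ELL.one b
  | bot _ ih => exact ELL.bot ih
  | awith _ _ ih1 ih2 => exact ELL.awith ih1 ih2
  | aplus1 _ ih => exact ELL.aplus1 ih
  | aplus2 _ ih => exact ELL.aplus2 ih
  | top b Γ => exact ELL.top b Γ
  | der hde => exact absurd hde id
  | @con b l e A Γ hco _ ih =>
    rcases hco with h0 | h2
    · rw [List.length_eq_zero_iff] at h0
      subst h0
      exact ELL.wk ih
    · match l, h2 with
      | [(), ()], _ => exact ELL.ctr ih
  | dig hdg => exact absurd hdg id
  | @prom b e A Δ _ _ ih => exact ELL.promf ih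

lemma ELL_to_superLL {b Γ} (h : ELL b Γ) : SuperLL deELL coELL dgELL pELL b Γ := by
  induction h with
  | ax b A => exact SuperLL.ax b A
  | ex _ hp ih => exact SuperLL.ex ih hp
  | cut _ _ ih1 ih2 => exact SuperLL.cut ih1 ih2
  | tens _ _ ih1 ih2 => exact SuperLL.tens ih1 ih2
  | parr _ ih => exact SuperLL.parr ih
  | one b => exact SuperLL.one b
  | bot _ ih => exact SuperLL.bot ih
  | awith _ _ ih1 ih2 => exact SuperLL.awith ih1 ih2
  | aplus1 _ ih => exact SuperLL.aplus1 ih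
  | aplus2 _ ih => exact SuperLL.aplus2 ih
  | top b Γ => exact SuperLL.top b Γ
  | promf _ ih => exact SuperLL.prom trivial ih
  | wk _ ih => exact SuperLL.con (l := []) (Or.inl rfl) ih
  | ctr _ ih => exact SuperLL.con (l := [(), ()]) (Or.inr rfl) ih

/-- ELL as an instance of superLL: the instance satisfies the cut-elimination axioms
and the expansion axiom, and provability (and cut-free provability) coincides with
ELL. -/
theorem superLL_ELL_instance :
    ((∀ (m n : ℕ) (e : Unit), 0 < m → pELL m e → pELL n e → pELL (m + n - 1) e) ∧
    (∀ (l : List Unit) (e : Unit), coELL l e → ∀ n : ℕ, pELL n e → ∀ ei ∈ l, pELL n ei) ∧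
    (∀ e1 e2 e : Unit, dgELL e1 e2 e → ∀ n : ℕ, pELL n e → pELL n e1 ∧ pELL n e2)) ∧
    (∀ e : Unit, pELL 1 e) ∧
    (∀ (b : Bool) (Γ : List (Formula Unit)),
      SuperLL deELL coELL dgELL pELL b Γ ↔ ELL b Γ) := by
  refine ⟨⟨fun _ _ _ _ _ _ => trivial,
    fun _ _ _ _ _ _ _ => trivial,
    fun _ _ _ h => absurd h id⟩,
    fun _ => trivial,
    fun b Γ => ⟨superLL_to_ELL, ELL_to_superLL⟩⟩
end

section
/- SLL to superLL: let τ be the translation of {•}-formulas into {•,★}-formulas sending ! to !_• and ? to ?_• (and fixing all other connectives). Then every sequent ⊢ Γ provable in SLL has its translation ⊢ τ(Γ) provable in the SLL instance of superLL (E = {•,★}; de(★) true only; co_k(★,…,★,•) true for all k ≥ 0 and nothing else; dg empty; p_n(•) and p_n(★) true for all n); moreover if the SLL proof is cut-free then so is the obtained superLL proof. -/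
/-- The two exponential signatures. -/
inductive Sig : Type
  | dot : Sig
  | star : Sig

inductive SLL : Bool → List (Formula Unit) → Prop
  | ax (b) (A : Formula Unit) : SLL b [A, A.dual]
  | ex {b Γ Δ} : SLL b Γ → Γ.Perm Δ → SLL b Δ
  | cut {A : Formula Unit} {Γ Δ : List (Formula Unit)} :
      SLL true (A :: Γ) → SLL true (A.dual :: Δ) → SLL true (Γ ++ Δ)
  | tens {b} {A B : Formula Unit} {Γ Δ : List (Formula Unit)} :
      SLL b (A :: Γ) → SLL b (B :: Δ) → SLL b (A.tens B :: (Γ ++ Δ))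
  | parr {b} {A B : Formula Unit} {Γ : List (Formula Unit)} :
      SLL b (A :: B :: Γ) → SLL b (A.parr B :: Γ)
  | one (b) : SLL b [Formula.one]
  | bot {b Γ} : SLL b Γ → SLL b (Formula.bot :: Γ)
  | awith {b} {A B : Formula Unit} {Γ : List (Formula Unit)} :
      SLL b (A :: Γ) → SLL b (B :: Γ) → SLL b (A.awith B :: Γ)
  | aplus1 {b} {A B : Formula Unit} {Γ : List (Formula Unit)} :
      SLL b (A :: Γ) → SLL b (A.aplus B :: Γ)
  | aplus2 {b} {A B : Formula Unit} {Γ : List (Formula Unit)} :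
      SLL b (B :: Γ) → SLL b (A.aplus B :: Γ)
  | top (b) (Γ) : SLL b (Formula.top :: Γ)
  | promf {b} {A : Formula Unit} {Δ : List (Formula Unit)} :
      SLL b (A :: Δ) → SLL b (Formula.oc () A :: Δ.map (Formula.wn ()))
  | mpx {b} (k : ℕ) {A : Formula Unit} {Γ : List (Formula Unit)} :
      SLL b (List.replicate k A ++ Γ) → SLL b (Formula.wn () A :: Γ)

/-- The SLL instance of superLL: `E = {•,★}`, `de(★)` only, `co_k(★,…,★,•)` for all
`k` and nothing else, `dg` empty, `p_n` full. -/
def deSLL : Sig → Prop := fun e => e = Sig.star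
def coSLL : List Sig → Sig → Prop := fun l e => (∀ x ∈ l, x = Sig.star) ∧ e = Sig.dot
def dgSLL : Sig → Sig → Sig → Prop := fun _ _ _ => False
def pSLL : ℕ → Sig → Prop := fun _ _ => True

/-- Translation of `{•}`-formulas into `{•,★}`-formulas sending `!` to `!_•` and `?`
to `?_•`. -/
def tau : Formula Unit → Formula Sig
  | Formula.var n => Formula.var n
  | Formula.covar n => Formula.covar n
  | Formula.tens A B => Formula.tens (tau A) (tau B)
  | Formula.parr A B => Formula.parr (tau A) (tau B)
  | Formula.one => Formula.one
  | Formula.bot => Formula.bot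
  | Formula.awith A B => Formula.awith (tau A) (tau B)
  | Formula.aplus A B => Formula.aplus (tau A) (tau B)
  | Formula.top => Formula.top
  | Formula.zero => Formula.zero
  | Formula.oc _ A => Formula.oc Sig.dot (tau A)
  | Formula.wn _ A => Formula.wn Sig.dot (tau A)

/-!
Structural induction on the SLL derivation, rule by rule: every rule except multiplexing is a
superLL rule of the same name, since `tau` commutes with duality and promotion at `•` is
allowed. Multiplexing `k` copies of `A` into `?A` becomes `k` derelictions to `?_★ A`
followed by the contraction `co_k(★,…,★,•)`.
-/

theorem tau_dual (A : Formula Unit) : tau A.dual = (tau A).dual := by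
  induction A <;> simp [tau, Formula.dual, *]

theorem map_tau_map_wn (Δ : List (Formula Unit)) :
    (Δ.map (Formula.wn ())).map tau = (Δ.map tau).map (Formula.wn Sig.dot) := by
  simp [tau, Function.comp_def]

namespace SuperLL

variable {E : Type} {de : E → Prop} {co : List E → E → Prop} {dg : E → E → E → Prop}
  {p : ℕ → E → Prop} {b : Bool}

theorem der_replicate {e : E} (he : de e) (k : ℕ) {A : Formula E} {Γ : List (Formula E)}
    (h : SuperLL de co dg p b (List.replicate k A ++ Γ)) :
    SuperLL de co dg p b (List.replicate k (Formula.wn e A) ++ Γ) := by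
  induction k generalizing Γ with
  | zero => exact h
  | succ k ih =>
    have hder : SuperLL de co dg p b (Formula.wn e A :: (List.replicate k A ++ Γ)) :=
      der he h
    have hrest := ih (ex hder List.perm_middle.symm)
    exact ex hrest List.perm_middle

theorem mpx_of_der_con {e' e : E} (hde : de e') (k : ℕ) (hco : co (List.replicate k e') e)
    {A : Formula E} {Γ : List (Formula E)} (h : SuperLL de co dg p b (List.replicate k A ++ Γ)) :
    SuperLL de co dg p b (Formula.wn e A :: Γ) :=
  con hco (by simpa only [List.map_replicate] using der_replicate hde k h)

end SuperLL

theorem coSLL_replicate_star (k : ℕ) : coSLL (List.replicate k Sig.star) Sig.dot :=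
  ⟨fun _ hx => List.eq_of_mem_replicate hx, rfl⟩

/-- SLL to superLL: every SLL-provable sequent translates to a provable sequent of the
SLL instance of superLL, preserving cut-freeness. -/
theorem SLL_to_superLL :
    ∀ (b : Bool) (Γ : List (Formula Unit)),
      SLL b Γ → SuperLL deSLL coSLL dgSLL pSLL b (Γ.map tau) := by
  intro b Γ h
  induction h with
  | ax b A => simpa [tau_dual] using SuperLL.ax b (tau A)
  | ex _ hp ih => exact SuperLL.ex ih (hp.map tau)
  | cut _ _ ih₁ ih₂ =>
    rw [List.map_append]
    exact SuperLL.cut ih₁ (by simpa [tau_dual] using ih₂)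
  | tens _ _ ih₁ ih₂ => simpa [tau] using SuperLL.tens ih₁ ih₂
  | parr _ ih => exact SuperLL.parr ih
  | one b => exact SuperLL.one b
  | bot _ ih => exact SuperLL.bot ih
  | awith _ _ ih₁ ih₂ => exact SuperLL.awith ih₁ ih₂
  | aplus1 _ ih => exact SuperLL.aplus1 ih
  | aplus2 _ ih => exact SuperLL.aplus2 ih
  | top b Γ => exact SuperLL.top b _
  | promf _ ih =>
    rw [List.map_cons, map_tau_map_wn]
    exact SuperLL.prom (e := Sig.dot) trivial ih
  | mpx k _ ih =>
    rw [List.map_append, List.map_replicate] at ih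
    exact SuperLL.mpx_of_der_con (show deSLL Sig.star from rfl) k (coSLL_replicate_star k) ih
end

section
/- superLL to SLL: let σ be the translation of {•,★}-formulas into {•}-formulas sending !_• to !, ?_• to ?, and erasing !_★ and ?_★ (σ(!_★ A) = σ(?_★ A) = σ(A)), fixing all other connectives. Then every sequent ⊢ Γ provable in the SLL instance of superLL (E = {•,★}; de(★) true only; co_k(★,…,★,•) true for all k ≥ 0 and nothing else; dg empty; p_n(•) and p_n(★) true for all n) has its translation ⊢ σ(Γ) provable in SLL; moreover if the superLL proof is cut-free then so is the obtained SLL proof. -/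
/-- Translation of `{•,★}`-formulas into `{•}`-formulas sending `!_•` to `!`, `?_•` to
`?` and erasing `!_★`, `?_★`. -/
def sigma : Formula Sig → Formula Unit
  | Formula.var n => Formula.var n
  | Formula.covar n => Formula.covar n
  | Formula.tens A B => Formula.tens (sigma A) (sigma B)
  | Formula.parr A B => Formula.parr (sigma A) (sigma B)
  | Formula.one => Formula.one
  | Formula.bot => Formula.bot
  | Formula.awith A B => Formula.awith (sigma A) (sigma B)
  | Formula.aplus A B => Formula.aplus (sigma A) (sigma B)
  | Formula.top => Formula.top
  | Formula.zero => Formula.zero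
  | Formula.oc Sig.dot A => Formula.oc () (sigma A)
  | Formula.oc Sig.star A => sigma A
  | Formula.wn Sig.dot A => Formula.wn () (sigma A)
  | Formula.wn Sig.star A => sigma A

@[simp]
lemma sigma_dual (A : Formula Sig) : sigma A.dual = (sigma A).dual := by
  induction A with
  | oc e A ih => cases e <;> simp [Formula.dual, sigma, ih]
  | wn e A ih => cases e <;> simp [Formula.dual, sigma, ih]
  | _ => simp_all [Formula.dual, sigma]

lemma map_sigma_wn_dot (Δ : List (Formula Sig)) :
    (Δ.map (Formula.wn Sig.dot)).map sigma = (Δ.map sigma).map (Formula.wn ()) := by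
  simp only [List.map_map]
  rfl

lemma map_sigma_wn_star (Δ : List (Formula Sig)) :
    (Δ.map (Formula.wn Sig.star)).map sigma = Δ.map sigma := by
  simp only [List.map_map]
  rfl

lemma map_sigma_wn_of_forall_eq_star {l : List Sig} (hl : ∀ e ∈ l, e = Sig.star)
    (A : Formula Sig) :
    (l.map fun e => Formula.wn e A).map sigma = List.replicate l.length (sigma A) := by
  rw [List.map_map, ← List.length_map (f := sigma ∘ fun e => Formula.wn e A)]
  refine List.eq_replicate_of_mem fun x hx => ?_
  obtain ⟨e, he, rfl⟩ := List.mem_map.mp hx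
  rw [hl e he]
  rfl

/-- superLL to SLL: every sequent provable in the SLL instance of superLL translates to
an SLL-provable sequent, preserving cut-freeness. -/
theorem superLL_to_SLL :
    ∀ (b : Bool) (Γ : List (Formula Sig)),
      SuperLL deSLL coSLL dgSLL pSLL b Γ → SLL b (Γ.map sigma) := by
  intro b Γ h
  induction h with
  | ax b A => simpa using SLL.ax b (sigma A)
  | ex _ hperm ih => exact SLL.ex ih (hperm.map sigma)
  | cut _ _ ih₁ ih₂ => simpa using SLL.cut ih₁ (by simpa using ih₂)
  | tens _ _ ih₁ ih₂ =>
    rw [List.map_cons, List.map_append]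
    exact SLL.tens ih₁ ih₂
  | parr _ ih => exact SLL.parr ih
  | one b => exact SLL.one b
  | bot _ ih => exact SLL.bot ih
  | awith _ _ ih₁ ih₂ => exact SLL.awith ih₁ ih₂
  | aplus1 _ ih => exact SLL.aplus1 ih
  | aplus2 _ ih => exact SLL.aplus2 ih
  | top b Γ => exact SLL.top b _
  | der hde _ ih => subst hde; exact ih
  | @con _ l _ A _ hco _ ih =>
    obtain ⟨hl, rfl⟩ := hco
    rw [List.map_append, map_sigma_wn_of_forall_eq_star hl] at ih
    exact SLL.mpx l.length ih
  | dig hdg => exact hdg.elim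
  | @prom _ e A Δ _ _ ih =>
    cases e with
    | dot =>
      rw [List.map_cons, map_sigma_wn_dot]
      exact SLL.promf ih
    | star =>
      rw [List.map_cons, map_sigma_wn_star]
      exact ih
end

section
/- LL as an instance of superLL: consider the instance of superLL with E = {•} and all relations full, i.e. de(•) true, co_k(•,…,•,•) true for all k ≥ 0, dg(•,•,•) true, and p_n(•) true for all n. Then (i) this instance satisfies the Girardization axioms (gir1)–(gir5), and (ii) writing !A := !_• A and ?A := ?_• A, a sequent is provable in this instance if and only if it is provable in LL (linear logic with Girard's promotion). -/
inductive LL : Bool → List (Formula Unit) → Prop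
  | ax (b) (A : Formula Unit) : LL b [A, A.dual]
  | ex {b Γ Δ} : LL b Γ → Γ.Perm Δ → LL b Δ
  | cut {A : Formula Unit} {Γ Δ : List (Formula Unit)} :
      LL true (A :: Γ) → LL true (A.dual :: Δ) → LL true (Γ ++ Δ)
  | tens {b} {A B : Formula Unit} {Γ Δ : List (Formula Unit)} :
      LL b (A :: Γ) → LL b (B :: Δ) → LL b (A.tens B :: (Γ ++ Δ))
  | parr {b} {A B : Formula Unit} {Γ : List (Formula Unit)} :
      LL b (A :: B :: Γ) → LL b (A.parr B :: Γ)
  | one (b) : LL b [Formula.one]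
  | bot {b Γ} : LL b Γ → LL b (Formula.bot :: Γ)
  | awith {b} {A B : Formula Unit} {Γ : List (Formula Unit)} :
      LL b (A :: Γ) → LL b (B :: Γ) → LL b (A.awith B :: Γ)
  | aplus1 {b} {A B : Formula Unit} {Γ : List (Formula Unit)} :
      LL b (A :: Γ) → LL b (A.aplus B :: Γ)
  | aplus2 {b} {A B : Formula Unit} {Γ : List (Formula Unit)} :
      LL b (B :: Γ) → LL b (A.aplus B :: Γ)
  | top (b) (Γ) : LL b (Formula.top :: Γ)
  | prom {b} {A : Formula Unit} {Γ : List (Formula Unit)} :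
      LL b (A :: Γ.map (Formula.wn ())) → LL b (Formula.oc () A :: Γ.map (Formula.wn ()))
  | der {b} {A : Formula Unit} {Γ : List (Formula Unit)} :
      LL b (A :: Γ) → LL b (Formula.wn () A :: Γ)
  | wk {b} {A : Formula Unit} {Γ : List (Formula Unit)} :
      LL b Γ → LL b (Formula.wn () A :: Γ)
  | ctr {b} {A : Formula Unit} {Γ : List (Formula Unit)} :
      LL b (Formula.wn () A :: Formula.wn () A :: Γ) → LL b (Formula.wn () A :: Γ)

/-- The LL instance of superLL: `E = {•}` and all relations full. -/
def deLL : Unit → Prop := fun _ => True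
def coLL : List Unit → Unit → Prop := fun _ _ => True
def dgLL : Unit → Unit → Unit → Prop := fun _ _ _ => True
def pLL : ℕ → Unit → Prop := fun _ _ => True

/-!
LL's promotion is superLL's functorial promotion followed by digging each context formula
`??B` into `?B`; weakening and contraction are the nullary and binary instances of
superLL's contraction. Conversely, superLL's `k`-ary contraction is `k - 1` binary
contractions, or one weakening when `k = 0`, and digging is admissible in LL by a cut
against `⊢ !!A⊥, ?A`, obtained by promoting `⊢ A⊥, ?A` twice.
-/

open Formula

namespace LL

theorem der_map {b : Bool} :
    ∀ (Γ Δ : List (Formula Unit)), LL b (Δ ++ Γ) → LL b (Δ ++ Γ.map (wn ()))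
  | [], Δ, h => by simpa using h
  | D :: Γ, Δ, h => by
    have hD : LL b (wn () D :: (Δ ++ Γ)) := der (ex h List.perm_middle)
    have hΓ := der_map Γ (wn () D :: Δ) hD
    exact ex hΓ (by simpa using List.perm_middle.symm)

theorem ctr_replicate {b : Bool} {A : Formula Unit} :
    ∀ (n : ℕ) (Γ : List (Formula Unit)),
      LL b (List.replicate n (wn () A) ++ Γ) → LL b (wn () A :: Γ)
  | 0, Γ, h => wk (by simpa using h)
  | n + 1, Γ, h => by
    have h' : LL b (List.replicate n (wn () A) ++ (wn () A :: Γ)) :=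
      ex h (by simpa [List.replicate_succ] using List.perm_middle.symm)
    exact ctr (ctr_replicate n _ h')

theorem dig {A : Formula Unit} {Γ : List (Formula Unit)}
    (h : LL true (wn () (wn () A) :: Γ)) : LL true (wn () A :: Γ) := by
  have hax : LL true [A.dual, wn () A] := ex (der (ax true A)) (.swap _ _ _)
  have hprom : LL true [oc () (oc () A.dual), wn () A] :=
    prom (Γ := [A]) (prom (Γ := [A]) hax)
  exact ex (cut (A := wn () (wn () A)) h hprom) (List.perm_append_singleton _ _)

end LL

namespace SuperLL

variable {E : Type} {de : E → Prop} {co : List E → E → Prop} {dg : E → E → E → Prop}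
  {p : ℕ → E → Prop}

theorem dig_map {b : Bool} {e : E} (hdg : dg e e e) :
    ∀ (Γ Δ : List (Formula E)), SuperLL de co dg p b (Δ ++ Γ.map (fun D => wn e (wn e D))) →
      SuperLL de co dg p b (Δ ++ Γ.map (wn e))
  | [], Δ, h => by simpa using h
  | D :: Γ, Δ, h => by
    have hD : SuperLL de co dg p b (wn e D :: (Δ ++ Γ.map (fun D => wn e (wn e D)))) :=
      dig hdg (ex h List.perm_middle)
    have hΓ := dig_map hdg Γ (wn e D :: Δ) hD
    exact ex hΓ (by simpa using List.perm_middle.symm)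

end SuperLL

theorem LL.of_superLL {b : Bool} {Γ : List (Formula Unit)}
    (h : SuperLL deLL coLL dgLL pLL b Γ) : LL true Γ := by
  induction h with
  | ax _ A => exact .ax _ A
  | ex _ hp ih => exact .ex ih hp
  | cut _ _ ih₁ ih₂ => exact .cut ih₁ ih₂
  | tens _ _ ih₁ ih₂ => exact .tens ih₁ ih₂
  | parr _ ih => exact .parr ih
  | one _ => exact .one _
  | bot _ ih => exact .bot ih
  | awith _ _ ih₁ ih₂ => exact .awith ih₁ ih₂
  | aplus1 _ ih => exact .aplus1 ih
  | aplus2 _ ih => exact .aplus2 ih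
  | top _ Γ => exact .top _ Γ
  | der _ _ ih => exact .der ih
  | @con _ l _ A Γ _ _ ih =>
    have hconst : l.map (fun e => wn e A) = List.replicate l.length (wn () A) :=
      List.map_const' (l := l) (b := wn () A)
    exact .ctr_replicate l.length Γ (hconst ▸ ih)
  | dig _ _ ih => exact .dig ih
  | @prom _ _ A Δ _ _ ih => exact .prom (.der_map Δ [A] ih)

theorem SuperLL.of_LL {b : Bool} {Γ : List (Formula Unit)}
    (h : LL b Γ) : SuperLL deLL coLL dgLL pLL b Γ := by
  induction h with
  | ax _ A => exact .ax _ A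
  | ex _ hp ih => exact .ex ih hp
  | cut _ _ ih₁ ih₂ => exact .cut ih₁ ih₂
  | tens _ _ ih₁ ih₂ => exact .tens ih₁ ih₂
  | parr _ ih => exact .parr ih
  | one _ => exact .one _
  | bot _ ih => exact .bot ih
  | awith _ _ ih₁ ih₂ => exact .awith ih₁ ih₂
  | aplus1 _ ih => exact .aplus1 ih
  | aplus2 _ ih => exact .aplus2 ih
  | top _ Γ => exact .top _ Γ
  | der _ ih => exact .der trivial ih
  | wk _ ih => exact .con (l := []) trivial ih
  | ctr _ ih => exact .con (l := [(), ()]) trivial ih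
  | @prom b' A Γ _ ih =>
    have h : SuperLL deLL coLL dgLL pLL b' ([oc () A] ++ Γ.map fun D => wn () (wn () D)) := by
      simpa [Function.comp_def] using
        SuperLL.prom (Δ := Γ.map (wn ())) (e := ()) (trivial : pLL _ ()) ih
    exact dig_map trivial Γ [oc () A] h

/-- LL as an instance of superLL: the full instance on a singleton satisfies the
Girardization axioms, and provability in the instance coincides with provability in LL
(with Girard's promotion). -/
theorem superLL_LL_instance :
    ((∀ e1 e2 e : Unit, dgLL e1 e2 e → pLL 1 e1) ∧
    (∀ e1 e2 e : Unit, deLL e1 → dgLL e1 e2 e → coLL [e2] e) ∧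
    (∀ (l : List Unit) (e1 e2 e : Unit), coLL l e1 → dgLL e1 e2 e →
      ∃ l' : List Unit, List.Forall₂ (fun εi ε'i => dgLL εi e2 ε'i) l l' ∧ coLL l' e) ∧
    (∀ e1 e2 e3 e' e : Unit, dgLL e1 e2 e' → dgLL e' e3 e →
      ∃ e'' : Unit, dgLL e2 e3 e'' ∧ dgLL e1 e'' e) ∧
    (∀ (n : ℕ) (e : Unit), 0 < n → pLL n e → ∃ e' : Unit, deLL e' ∧ dgLL e e' e)) ∧
    (∀ Γ : List (Formula Unit), SuperLL deLL coLL dgLL pLL true Γ ↔ LL true Γ) := by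
  exact ⟨⟨fun _ _ _ _ => trivial, fun _ _ _ _ _ => trivial,
    fun l _ _ _ _ _ => ⟨l, List.forall₂_same.2 fun _ _ => trivial, trivial⟩,
    fun _ _ _ _ _ _ _ => ⟨(), trivial, trivial⟩, fun _ _ _ _ => ⟨(), trivial, trivial⟩⟩,
    fun Γ => ⟨LL.of_superLL, SuperLL.of_LL⟩⟩
end

section
/- Shifting operators as an instance of superLL: consider the instance of superLL with E = {•,★}, de(•) and de(★) true, co_0(•), co_1(•,•), co_2(•,•,•) and co_1(★,★) true (all other co_k false), dg(•,•,•) and dg(★,★,★) true (all other dg false), and p_n(•) and p_n(★) true for all n. Then (i) this instance satisfies the cut-elimination axioms (ce1)–(ce3), the expansion axiom (ea), and the Girardization axioms (gir1)–(gir5), and (ii) writing !A := !_• A, ?A := ?_• A, ∧A := !_★ A, ∨A := ?_★ A, a sequent is provable in this instance if and only if it is provable in LL with shifting operators. -/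
inductive LLsh : Bool → List (Formula Sig) → Prop
  | ax (b) (A : Formula Sig) : LLsh b [A, A.dual]
  | ex {b Γ Δ} : LLsh b Γ → Γ.Perm Δ → LLsh b Δ
  | cut {A : Formula Sig} {Γ Δ : List (Formula Sig)} :
      LLsh true (A :: Γ) → LLsh true (A.dual :: Δ) → LLsh true (Γ ++ Δ)
  | tens {b} {A B : Formula Sig} {Γ Δ : List (Formula Sig)} :
      LLsh b (A :: Γ) → LLsh b (B :: Δ) → LLsh b (A.tens B :: (Γ ++ Δ))
  | parr {b} {A B : Formula Sig} {Γ : List (Formula Sig)} :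
      LLsh b (A :: B :: Γ) → LLsh b (A.parr B :: Γ)
  | one (b) : LLsh b [Formula.one]
  | bot {b Γ} : LLsh b Γ → LLsh b (Formula.bot :: Γ)
  | awith {b} {A B : Formula Sig} {Γ : List (Formula Sig)} :
      LLsh b (A :: Γ) → LLsh b (B :: Γ) → LLsh b (A.awith B :: Γ)
  | aplus1 {b} {A B : Formula Sig} {Γ : List (Formula Sig)} :
      LLsh b (A :: Γ) → LLsh b (A.aplus B :: Γ)
  | aplus2 {b} {A B : Formula Sig} {Γ : List (Formula Sig)} :
      LLsh b (B :: Γ) → LLsh b (A.aplus B :: Γ)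
  | top (b) (Γ) : LLsh b (Formula.top :: Γ)
  | prom {b} {A : Formula Sig} {Γ : List (Formula Sig)} :
      LLsh b (A :: Γ.map (Formula.wn Sig.dot)) →
      LLsh b (Formula.oc Sig.dot A :: Γ.map (Formula.wn Sig.dot))
  | der {b} {A : Formula Sig} {Γ : List (Formula Sig)} :
      LLsh b (A :: Γ) → LLsh b (Formula.wn Sig.dot A :: Γ)
  | wk {b} {A : Formula Sig} {Γ : List (Formula Sig)} :
      LLsh b Γ → LLsh b (Formula.wn Sig.dot A :: Γ)
  | ctr {b} {A : Formula Sig} {Γ : List (Formula Sig)} :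
      LLsh b (Formula.wn Sig.dot A :: Formula.wn Sig.dot A :: Γ) →
      LLsh b (Formula.wn Sig.dot A :: Γ)
  | shpos {b} {A : Formula Sig} {Γ : List (Formula Sig)} :
      LLsh b (A :: Γ.map (Formula.wn Sig.star)) →
      LLsh b (Formula.oc Sig.star A :: Γ.map (Formula.wn Sig.star))
  | shneg {b} {A : Formula Sig} {Γ : List (Formula Sig)} :
      LLsh b (A :: Γ) → LLsh b (Formula.wn Sig.star A :: Γ)

/-- The shifting-operators instance of superLL: `E = {•,★}`, `de` full, `co_0(•)`,
`co_1(•,•)`, `co_2(•,•,•)`, `co_1(★,★)` true (other `co_k` false), `dg(•,•,•)` and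
`dg(★,★,★)` true (other `dg` false), `p_n` full. -/
def deSh : Sig → Prop := fun _ => True
def coSh : List Sig → Sig → Prop := fun l e =>
  (l = [] ∧ e = Sig.dot) ∨ (l = [Sig.dot] ∧ e = Sig.dot) ∨
  (l = [Sig.dot, Sig.dot] ∧ e = Sig.dot) ∨ (l = [Sig.star] ∧ e = Sig.star)
def dgSh : Sig → Sig → Sig → Prop := fun e1 e2 e =>
  (e1 = Sig.dot ∧ e2 = Sig.dot ∧ e = Sig.dot) ∨
  (e1 = Sig.star ∧ e2 = Sig.star ∧ e = Sig.star)
def pSh : ℕ → Sig → Prop := fun _ _ => True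

/-!
The two calculi differ only in their exponential rules, and each rule of one is derivable in
the other. Girard's promotion and the positive shift are functorial promotion followed by digging
on every context formula; conversely, functorial promotion is dereliction on the context followed
by promotion, and digging is a cut against `⊢ !!A⊥, ?A`. Since `dg(e₁,e₂,e)` holds exactly when
`e₁ = e₂ = e`, and `co` only relates a signature to copies of itself, the axioms reduce to finite
checks.
-/

section ContextRules

variable {α : Type*} {R : List α → Prop}

theorem map_suffix_of_rule (hperm : ∀ {Γ Δ : List α}, R Γ → Γ.Perm Δ → R Δ) {f g : α → α}
    (hrule : ∀ {A : α} {Γ : List α}, R (g A :: Γ) → R (f A :: Γ)) :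
    ∀ (Γ Θ : List α), R (Θ ++ Γ.map g) → R (Θ ++ Γ.map f)
  | [], Θ, h => by simpa using h
  | A :: Γ, Θ, h => by
    have hfA : R (f A :: (Θ ++ Γ.map g)) := hrule (hperm h List.perm_middle)
    have hmoved : R ((Θ ++ [f A]) ++ Γ.map g) :=
      hperm hfA (by simpa using List.perm_middle.symm)
    simpa using map_suffix_of_rule hperm hrule Γ (Θ ++ [f A]) hmoved

end ContextRules

theorem dgSh_iff {e1 e2 e : Sig} : dgSh e1 e2 e ↔ e1 = e ∧ e2 = e := by
  cases e1 <;> cases e2 <;> cases e <;> simp [dgSh]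

theorem dgSh_self (e : Sig) : dgSh e e e := dgSh_iff.2 ⟨rfl, rfl⟩

theorem coSh_singleton_self (e : Sig) : coSh [e] e := by
  cases e <;> simp [coSh]

theorem coSh.eq_of_mem {l : List Sig} {e : Sig} (h : coSh l e) : ∀ x ∈ l, x = e := by
  rcases h with ⟨rfl, -⟩ | ⟨rfl, rfl⟩ | ⟨rfl, rfl⟩ | ⟨rfl, rfl⟩ <;> simp

namespace LLsh

theorem wn_intro {b : Bool} (e : Sig) {A : Formula Sig} {Γ : List (Formula Sig)}
    (h : LLsh b (A :: Γ)) : LLsh b (Formula.wn e A :: Γ) := by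
  cases e
  · exact der h
  · exact shneg h

theorem oc_intro {b : Bool} (e : Sig) {A : Formula Sig} {Γ : List (Formula Sig)}
    (h : LLsh b (A :: Γ.map (Formula.wn e))) : LLsh b (Formula.oc e A :: Γ.map (Formula.wn e)) := by
  cases e
  · exact prom h
  · exact shpos h

theorem functorial_prom {b : Bool} (e : Sig) {A : Formula Sig} {Γ : List (Formula Sig)}
    (h : LLsh b (A :: Γ)) : LLsh b (Formula.oc e A :: Γ.map (Formula.wn e)) :=
  oc_intro e (map_suffix_of_rule (g := id) ex (wn_intro e) Γ [A] (by simpa using h))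

theorem oc_oc_dual_wn (e : Sig) (A : Formula Sig) :
    LLsh true [Formula.oc e (Formula.oc e A.dual), Formula.wn e A] :=
  oc_intro (Γ := [A]) e (functorial_prom e ((ax true A).ex (List.Perm.swap _ _ _)))

theorem dig {e : Sig} {A : Formula Sig} {Γ : List (Formula Sig)}
    (h : LLsh true (Formula.wn e (Formula.wn e A) :: Γ)) : LLsh true (Formula.wn e A :: Γ) :=
  (cut h (oc_oc_dual_wn e A)).ex (List.perm_append_singleton _ _)

end LLsh

theorem SuperLL.girard_prom {E : Type} {de : E → Prop} {co : List E → E → Prop}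
    {dg : E → E → E → Prop} {p : ℕ → E → Prop} {b : Bool} {e : E} {A : Formula E}
    {Γ : List (Formula E)} (hp : p Γ.length e) (hdg : dg e e e)
    (h : SuperLL de co dg p b (A :: Γ.map (Formula.wn e))) :
    SuperLL de co dg p b (Formula.oc e A :: Γ.map (Formula.wn e)) := by
  have hprom := SuperLL.prom (by rwa [List.length_map]) h
  rw [List.map_map] at hprom
  exact map_suffix_of_rule ex (dig hdg) Γ [Formula.oc e A] hprom

theorem LLsh_of_superLL {b : Bool} {Γ : List (Formula Sig)}
    (h : SuperLL deSh coSh dgSh pSh b Γ) : LLsh true Γ := by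
  induction h with
  | ax _ A => exact LLsh.ax _ A
  | ex _ hp ih => exact ih.ex hp
  | cut _ _ ih1 ih2 => exact LLsh.cut ih1 ih2
  | tens _ _ ih1 ih2 => exact LLsh.tens ih1 ih2
  | parr _ ih => exact LLsh.parr ih
  | one _ => exact LLsh.one _
  | bot _ ih => exact LLsh.bot ih
  | awith _ _ ih1 ih2 => exact LLsh.awith ih1 ih2
  | aplus1 _ ih => exact LLsh.aplus1 ih
  | aplus2 _ ih => exact LLsh.aplus2 ih
  | top _ Γ => exact LLsh.top _ Γ
  | @der _ e _ _ _ _ ih => exact LLsh.wn_intro e ih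
  | con hco _ ih =>
    rcases hco with ⟨rfl, rfl⟩ | ⟨rfl, rfl⟩ | ⟨rfl, rfl⟩ | ⟨rfl, rfl⟩
    · exact LLsh.wk ih
    · exact ih
    · exact LLsh.ctr ih
    · exact ih
  | dig hdg _ ih =>
    obtain ⟨rfl, rfl⟩ := dgSh_iff.1 hdg
    exact LLsh.dig ih
  | @prom _ e _ _ _ _ ih => exact LLsh.functorial_prom e ih

theorem superLL_of_LLsh {b : Bool} {Γ : List (Formula Sig)}
    (h : LLsh b Γ) : SuperLL deSh coSh dgSh pSh b Γ := by
  induction h with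
  | ax _ A => exact SuperLL.ax _ A
  | ex _ hp ih => exact ih.ex hp
  | cut _ _ ih1 ih2 => exact SuperLL.cut ih1 ih2
  | tens _ _ ih1 ih2 => exact SuperLL.tens ih1 ih2
  | parr _ ih => exact SuperLL.parr ih
  | one _ => exact SuperLL.one _
  | bot _ ih => exact SuperLL.bot ih
  | awith _ _ ih1 ih2 => exact SuperLL.awith ih1 ih2
  | aplus1 _ ih => exact SuperLL.aplus1 ih
  | aplus2 _ ih => exact SuperLL.aplus2 ih
  | top _ Γ => exact SuperLL.top _ Γ
  | prom _ ih => exact SuperLL.girard_prom trivial (dgSh_self _) ih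
  | der _ ih => exact SuperLL.der trivial ih
  | wk _ ih => exact SuperLL.con (l := []) (Or.inl ⟨rfl, rfl⟩) ih
  | ctr _ ih => exact SuperLL.con (l := [Sig.dot, Sig.dot]) (Or.inr (Or.inr (Or.inl ⟨rfl, rfl⟩))) ih
  | shpos _ ih => exact SuperLL.girard_prom trivial (dgSh_self _) ih
  | shneg _ ih => exact SuperLL.der trivial ih

/-- Shifting operators as an instance of superLL: the instance satisfies the
cut-elimination axioms, the expansion axiom and the Girardization axioms, and
provability in the instance coincides with provability in LL with shifting
operators. -/
theorem superLL_shift_instance :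
    ((∀ (m n : ℕ) (e : Sig), 0 < m → pSh m e → pSh n e → pSh (m + n - 1) e) ∧
    (∀ (l : List Sig) (e : Sig), coSh l e → ∀ n : ℕ, pSh n e → ∀ ei ∈ l, pSh n ei) ∧
    (∀ e1 e2 e : Sig, dgSh e1 e2 e → ∀ n : ℕ, pSh n e → pSh n e1 ∧ pSh n e2)) ∧
    (∀ e : Sig, pSh 1 e) ∧
    ((∀ e1 e2 e : Sig, dgSh e1 e2 e → pSh 1 e1) ∧
    (∀ e1 e2 e : Sig, deSh e1 → dgSh e1 e2 e → coSh [e2] e) ∧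
    (∀ (l : List Sig) (e1 e2 e : Sig), coSh l e1 → dgSh e1 e2 e →
      ∃ l' : List Sig, List.Forall₂ (fun εi ε'i => dgSh εi e2 ε'i) l l' ∧ coSh l' e) ∧
    (∀ e1 e2 e3 e' e : Sig, dgSh e1 e2 e' → dgSh e' e3 e →
      ∃ e'' : Sig, dgSh e2 e3 e'' ∧ dgSh e1 e'' e) ∧
    (∀ (n : ℕ) (e : Sig), 0 < n → pSh n e → ∃ e' : Sig, deSh e' ∧ dgSh e e' e)) ∧
    (∀ Γ : List (Formula Sig), SuperLL deSh coSh dgSh pSh true Γ ↔ LLsh true Γ) := by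
  refine ⟨⟨fun _ _ _ _ _ _ => trivial, fun _ _ _ _ _ _ _ => trivial,
      fun _ _ _ _ _ _ => ⟨trivial, trivial⟩⟩,
    fun _ => trivial, ⟨fun _ _ _ _ => trivial, ?gir2, ?gir3, ?gir4, ?gir5⟩,
    fun _ => ⟨LLsh_of_superLL, superLL_of_LLsh⟩⟩
  case gir2 =>
    intro e1 e2 e _ hdg
    obtain ⟨rfl, rfl⟩ := dgSh_iff.1 hdg
    exact coSh_singleton_self _
  case gir3 =>
    intro l e1 e2 e hco hdg
    obtain ⟨rfl, rfl⟩ := dgSh_iff.1 hdg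
    refine ⟨l, List.forall₂_same.2 fun x hx => ?_, hco⟩
    rw [hco.eq_of_mem x hx]
    exact dgSh_self _
  case gir4 =>
    intro e1 e2 e3 e' e h1 h2
    obtain ⟨rfl, rfl⟩ := dgSh_iff.1 h1
    obtain ⟨rfl, rfl⟩ := dgSh_iff.1 h2
    exact ⟨_, dgSh_self _, dgSh_self _⟩
  case gir5 => exact fun _ e _ _ => ⟨e, trivial, dgSh_self e⟩
end
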